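/- arXiv:2205.15425 — 3 statements merged into one kernel-verified Lean document; each statement's English description precedes it below -/
import Mathlib

section
/- If G is a graph whose maximum degree Δ(G) is even, then G is not of class 2^±; that is, there exists a signature σ (namely the all-positive signature) with χ'(G, σ) = Δ(G). -/
open SimpleGraph

namespace Signed

variable {V : Type*}

/-- The color set `M n`. -/
def colorSet (n : ℕ) : Set ℤ :=
  {m : ℤ | 2 * m.natAbs ≤ n ∧ (Even n → m ≠ 0)}

/-- `f` is an `n`-edge-coloring of the signed graph `(G, σ)`. -/
def IsEdgeColoring (G : SimpleGraph V) (σ : Sym2 V → ℤ) (n : ℕ)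
    (f : V → Sym2 V → ℤ) : Prop :=
  (∀ u v, G.Adj u v → f u s(u, v) ∈ colorSet n) ∧
  (∀ u v, G.Adj u v → f u s(u, v) = - σ s(u, v) * f v s(u, v)) ∧
  (∀ u v w, G.Adj u v → G.Adj u w → v ≠ w → f u s(u, v) ≠ f u s(u, w))

/-- `(G, σ)` admits an `n`-edge-coloring. -/
def Colorable (G : SimpleGraph V) (σ : Sym2 V → ℤ) (n : ℕ) : Prop :=
  ∃ f, IsEdgeColoring G σ n f

/-- The signed chromatic index. -/
noncomputable def chromIndex (G : SimpleGraph V) (σ : Sym2 V → ℤ) : ℕ :=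
  sInf {n | Colorable G σ n}

/-- `σ` is a signature on `G`: it takes values `±1` on edges. -/
def IsSignature (G : SimpleGraph V) (σ : Sym2 V → ℤ) : Prop :=
  ∀ e ∈ G.edgeSet, σ e = 1 ∨ σ e = -1

/-- Maximum degree (classical decidability). -/
noncomputable def maxDeg [Fintype V] (G : SimpleGraph V) : ℕ :=
  @SimpleGraph.maxDegree V G _ (Classical.decRel _)

/-- degree of a vertex, instance-free. -/
noncomputable def deg (G : SimpleGraph V) (v : V) : ℕ :=
  (G.neighborSet v).ncard

/-- A signed graph is balanced if every cycle has sign product `1`. -/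
def Balanced (H : SimpleGraph V) (σ : Sym2 V → ℤ) : Prop :=
  ∀ (u : V) (w : H.Walk u u), w.IsCycle → (w.edges.map σ).prod = 1

/-- A set of edges of `G` forming a matching. -/
def IsMatchingSet (G : SimpleGraph V) (M : Set (Sym2 V)) : Prop :=
  M ⊆ G.edgeSet ∧ ∀ e ∈ M, ∀ e' ∈ M, ∀ v : V, v ∈ e → v ∈ e' → e = e'

/-- `H` is a path graph: some path walk carries all of its edges. -/
def IsPathGraph (H : SimpleGraph V) : Prop :=
  ∃ (u v : V) (p : H.Walk u v), p.IsPath ∧ ∀ e, e ∈ H.edgeSet ↔ e ∈ p.edges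

/-- Class `1^±`. -/
def Class1pm [Fintype V] (G : SimpleGraph V) : Prop :=
  ∀ σ : Sym2 V → ℤ, IsSignature G σ → chromIndex G σ = maxDeg G

/-- Class `2^±`. -/
def Class2pm [Fintype V] (G : SimpleGraph V) : Prop :=
  ∀ σ : Sym2 V → ℤ, IsSignature G σ → chromIndex G σ = maxDeg G + 1

end Signed

open Signed SimpleGraph

/-!
With all signs positive, a `2k`-colouring amounts to an orientation together with colours
`c ∈ {1, …, k}` of the arcs that are distinct on the out-arcs and on the in-arcs of every vertex:
the arc `u → v` gets `c` at `u` and `-c` at `v`. Every finite graph has an orientation with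
`|outdeg - indeg| ≤ 1` everywhere (delete an edge at a vertex of odd degree, or any edge if all
degrees are even, orient the rest by induction and re-insert it), so for `Δ = 2k` all out- and
in-degrees are at most `k`. The bipartite out/in incidence graph then has maximum degree `k`, and
is `k`-edge-colourable: pad its adjacency matrix to a `k`-regular one and peel off permutations,
which exist by Birkhoff's theorem. Conversely `χ' ≥ Δ` because `|M_n| ≤ n`.
-/

namespace Signed

section Orientation

variable {V : Type*}

noncomputable def outDeg (D : V → V → Prop) (v : V) : ℕ := {w | D v w}.ncard

noncomputable def inDeg (D : V → V → Prop) (v : V) : ℕ := {w | D w v}.ncard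

structure IsOrientation (G : SimpleGraph V) (D : V → V → Prop) : Prop where
  adj_iff : ∀ u v, G.Adj u v ↔ D u v ∨ D v u
  asymm : ∀ u v, D u v → ¬ D v u

theorem IsOrientation.outDeg_add_inDeg [Finite V] {G : SimpleGraph V} {D : V → V → Prop}
    (hD : IsOrientation G D) (v : V) : outDeg D v + inDeg D v = deg G v := by
  have hdisj : Disjoint {w | D v w} {w | D w v} :=
    Set.disjoint_left.2 fun w hvw hwv => hD.asymm v w hvw hwv
  rw [outDeg, inDeg, deg, ← Set.ncard_union_eq hdisj]
  congr 1
  ext w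
  exact (hD.adj_iff v w).symm

theorem sum_outDeg_eq_sum_inDeg [Fintype V] (D : V → V → Prop) :
    ∑ v, outDeg D v = ∑ v, inDeg D v := by
  classical
  simp only [outDeg, inDeg, Set.ncard_eq_toFinset_card', Set.toFinset_ofPred,
    Finset.card_filter]
  exact Finset.sum_comm

def addArc (D : V → V → Prop) (x y : V) : V → V → Prop := fun a b => D a b ∨ (a = x ∧ b = y)

variable {D : V → V → Prop} {x y : V}

theorem outDeg_addArc_self [Finite V] (hxy : ¬ D x y) :
    outDeg (addArc D x y) x = outDeg D x + 1 := by
  have : {w | addArc D x y x w} = insert y {w | D x w} := by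
    ext w; simp [addArc, or_comm]
  rw [outDeg, this, Set.ncard_insert_of_notMem (show y ∉ {w | D x w} from hxy), outDeg]

theorem outDeg_addArc_of_ne {v : V} (hv : v ≠ x) : outDeg (addArc D x y) v = outDeg D v := by
  simp [outDeg, addArc, hv]

theorem inDeg_addArc_self [Finite V] (hxy : ¬ D x y) :
    inDeg (addArc D x y) y = inDeg D y + 1 := by
  have : {w | addArc D x y w y} = insert x {w | D w y} := by
    ext w; simp [addArc, or_comm]
  rw [inDeg, this, Set.ncard_insert_of_notMem (show x ∉ {w | D w y} from hxy), inDeg]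

theorem inDeg_addArc_of_ne {v : V} (hv : v ≠ y) : inDeg (addArc D x y) v = inDeg D v := by
  simp [inDeg, addArc, hv]

theorem IsOrientation.not_rel_of_mem {G : SimpleGraph V} {s : Set (Sym2 V)} {a b : V}
    (hD : IsOrientation (G.deleteEdges s) D) (hab : s(a, b) ∈ s) : ¬ D a b := fun h =>
  (deleteEdges_adj.1 ((hD.adj_iff a b).2 (Or.inl h))).2 hab

theorem IsOrientation.addArc {G : SimpleGraph V}
    (hD : IsOrientation (G.deleteEdges {s(x, y)}) D) (hxy : G.Adj x y) :
    IsOrientation G (addArc D x y) where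
  adj_iff u v := by
    by_cases he : s(u, v) = s(x, y)
    · rcases Sym2.eq_iff.1 he with ⟨rfl, rfl⟩ | ⟨rfl, rfl⟩
      · simp [Signed.addArc, hxy]
      · simp [Signed.addArc, hxy.symm]
    · have h₁ : ¬ (u = x ∧ v = y) := by rintro ⟨rfl, rfl⟩; exact he rfl
      have h₂ : ¬ (v = x ∧ u = y) := by rintro ⟨rfl, rfl⟩; exact he Sym2.eq_swap
      have hdel : (G.deleteEdges {s(x, y)}).Adj u v ↔ G.Adj u v := by simp [he]
      rw [← hdel, hD.adj_iff]
      simp [Signed.addArc, h₁, h₂]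
  asymm u v := by
    have hyx : ¬ D y x := hD.not_rel_of_mem Sym2.eq_swap
    rintro (huv | ⟨rfl, rfl⟩) hvu
    · rcases hvu with hvu | ⟨rfl, rfl⟩
      · exact hD.asymm u v huv hvu
      · exact hyx huv
    · rcases hvu with hvu | ⟨hyx', -⟩
      · exact hyx hvu
      · exact hxy.ne hyx'.symm

def IsAlmostBalanced (D : V → V → Prop) : Prop :=
  ∀ v, outDeg D v ≤ inDeg D v + 1 ∧ inDeg D v ≤ outDeg D v + 1

theorem IsAlmostBalanced.addArc [Finite V] (hD : IsAlmostBalanced D) (hxy : ¬ D x y)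
    (hne : x ≠ y) (hx : outDeg D x ≤ inDeg D x) (hy : inDeg D y ≤ outDeg D y) :
    IsAlmostBalanced (addArc D x y) := by
  intro v
  have := hD v
  by_cases hvx : v = x
  · subst hvx
    rw [outDeg_addArc_self hxy, inDeg_addArc_of_ne hne]
    omega
  by_cases hvy : v = y
  · subst hvy
    rw [outDeg_addArc_of_ne hvx, inDeg_addArc_self hxy]
    omega
  rw [outDeg_addArc_of_ne hvx, inDeg_addArc_of_ne hvy]
  exact this

/-- Re-inserting `uv` fails only if `u` and `v` both have surplus out-degree or both surplus
in-degree. An odd degree of `v` forces `v` to be balanced in `D`; if all degrees are even, all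
vertices other than `u, v` are balanced and the handshake `∑ outDeg = ∑ inDeg` balances `u`
against `v`. -/
theorem IsOrientation.exists_almostBalanced_of_deleteEdges [Finite V] {G : SimpleGraph V}
    {u v : V} (hD : IsOrientation (G.deleteEdges {s(u, v)}) D) (hbal : IsAlmostBalanced D)
    (huv : G.Adj u v) (hchoice : Odd (deg G v) ∨ ∀ w, Even (deg G w)) :
    ∃ D', IsOrientation G D' ∧ IsAlmostBalanced D' := by
  have := Fintype.ofFinite V
  have hG := hD.addArc huv
  have hnot : ¬ D u v := hD.not_rel_of_mem rfl
  have hnot' : ¬ D v u := hD.not_rel_of_mem Sym2.eq_swap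
  have hdu := hG.outDeg_add_inDeg u
  rw [outDeg_addArc_self hnot, inDeg_addArc_of_ne huv.ne] at hdu
  have hdv := hG.outDeg_add_inDeg v
  rw [outDeg_addArc_of_ne huv.ne.symm, inDeg_addArc_self hnot] at hdv
  have hbu := hbal u
  have hbv := hbal v
  have hcompat : outDeg D v = inDeg D v ∨
      (outDeg D u + outDeg D v : ℤ) = inDeg D u + inDeg D v := by
    rcases hchoice with hodd | heven
    · rw [Nat.odd_iff] at hodd
      omega
    · right
      have hsum : ∑ w, ((outDeg D w : ℤ) - inDeg D w) = 0 := by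
        rw [Finset.sum_sub_distrib, sub_eq_zero]
        exact_mod_cast sum_outDeg_eq_sum_inDeg D
      rw [Finset.sum_eq_add_of_mem u v (Finset.mem_univ _) (Finset.mem_univ _) huv.ne
        fun w _ hw => ?_] at hsum
      · omega
      have hdw := hG.outDeg_add_inDeg w
      rw [outDeg_addArc_of_ne hw.1, inDeg_addArc_of_ne hw.2] at hdw
      have := Nat.even_iff.1 (heven w)
      have := hbal w
      omega
  by_cases hdir : outDeg D u ≤ inDeg D u ∧ inDeg D v ≤ outDeg D v
  · exact ⟨_, hG, hbal.addArc hnot huv.ne hdir.1 hdir.2⟩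
  · rw [Sym2.eq_swap] at hD
    exact ⟨_, hD.addArc huv.symm, hbal.addArc hnot' huv.ne.symm (by omega) (by omega)⟩

theorem exists_almostBalanced_orientation [Finite V] (G : SimpleGraph V) :
    ∃ D, IsOrientation G D ∧ IsAlmostBalanced D := by
  induction hn : G.edgeSet.ncard generalizing G with
  | zero =>
    obtain rfl : G = ⊥ := edgeSet_eq_empty.1 ((Set.ncard_eq_zero).1 hn)
    exact ⟨fun _ _ => False, ⟨by simp, by simp⟩, fun v => by simp [outDeg, inDeg]⟩
  | succ n ih =>
    obtain ⟨u, v, huv, hchoice⟩ : ∃ u v, G.Adj u v ∧ (Odd (deg G v) ∨ ∀ w, Even (deg G w)) := by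
      by_cases hodd : ∃ v, Odd (deg G v)
      · obtain ⟨v, hv⟩ := hodd
        obtain ⟨u, hu⟩ := (Set.ncard_pos).1 hv.pos
        exact ⟨u, v, G.adj_symm hu, Or.inl hv⟩
      · obtain ⟨e, he⟩ := Set.nonempty_of_ncard_ne_zero (s := G.edgeSet) (by omega)
        induction e using Sym2.ind
        exact ⟨_, _, he, Or.inr fun w => Nat.not_odd_iff_even.1 fun h => hodd ⟨w, h⟩⟩
    obtain ⟨D, hD, hbal⟩ := ih (G.deleteEdges {s(u, v)}) (by
      rw [edgeSet_deleteEdges, Set.ncard_sdiff_singleton_of_mem (G.mem_edgeSet.2 huv)]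
      omega)
    exact hD.exists_almostBalanced_of_deleteEdges hbal huv hchoice

end Orientation

section Permutations

variable {ι : Type*} [Fintype ι] [DecidableEq ι]

theorem exists_perm_forall_pos_of_sum_eq {k : ℕ} (hk : 0 < k) (M : ι → ι → ℕ)
    (hrow : ∀ i, ∑ j, M i j = k) (hcol : ∀ j, ∑ i, M i j = k) :
    ∃ σ : Equiv.Perm ι, ∀ i, 0 < M i (σ i) := by
  set P : Matrix ι ι ℚ := fun i j => M i j / k
  have hP : P ∈ doublyStochastic ℚ ι := by
    refine mem_doublyStochastic_iff_sum.2 ⟨fun i j => by positivity, fun i => ?_, fun j => ?_⟩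
    · simp only [P, ← Finset.sum_div, ← Nat.cast_sum, hrow]
      field_simp
    · simp only [P, ← Finset.sum_div, ← Nat.cast_sum, hcol]
      field_simp
  obtain ⟨w, hw₀, hw₁, hwP⟩ := exists_eq_sum_perm_of_mem_doublyStochastic hP
  obtain ⟨σ, -, hσ⟩ := Finset.exists_lt_of_sum_lt (f := 0) (g := w) (s := Finset.univ)
    (by simp [hw₁])
  refine ⟨σ, fun i => ?_⟩
  have : w σ ≤ P i (σ i) := by
    rw [← hwP, Matrix.sum_apply]
    calc w σ = (w σ • σ.permMatrix ℚ) i (σ i) := by simp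
      _ ≤ _ := Finset.single_le_sum (f := fun τ => (w τ • τ.permMatrix ℚ) i (σ i))
          (fun τ _ => by
            simp only [Matrix.smul_apply, smul_eq_mul, Equiv.Perm.permMatrix,
              PEquiv.toMatrix_apply]
            have := hw₀ τ
            positivity) (Finset.mem_univ σ)
  have : (0 : ℚ) < M i (σ i) / k := lt_of_lt_of_le hσ this
  exact_mod_cast (div_pos_iff_of_pos_right (by positivity)).1 this

theorem exists_perms_of_sum_eq (k : ℕ) (M : ι → ι → ℕ)
    (hrow : ∀ i, ∑ j, M i j = k) (hcol : ∀ j, ∑ i, M i j = k) :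
    ∃ π : ℕ → Equiv.Perm ι, ∀ i j, M i j = ∑ t ∈ Finset.range k, if π t i = j then 1 else 0 := by
  induction k generalizing M with
  | zero =>
    refine ⟨fun _ => 1, fun i j => ?_⟩
    simpa using Finset.sum_eq_zero_iff.1 (hrow i) j (Finset.mem_univ j)
  | succ k ih =>
    obtain ⟨σ, hσ⟩ := exists_perm_forall_pos_of_sum_eq k.succ_pos M hrow hcol
    have hle : ∀ i j, (if σ i = j then 1 else 0) ≤ M i j := by
      intro i j
      split_ifs with h
      · exact h ▸ hσ i
      · exact Nat.zero_le _
    obtain ⟨π, hπ⟩ := ih (fun i j => M i j - if σ i = j then 1 else 0)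
      (fun i => by
        rw [Finset.sum_tsub_distrib _ fun j _ => hle i j, hrow, Finset.sum_ite_eq]
        simp)
      (fun j => by
        rw [Finset.sum_tsub_distrib _ fun i _ => hle i j, hcol]
        simp [← Equiv.eq_symm_apply])
    refine ⟨Function.update π k σ, fun i j => ?_⟩
    rw [Finset.sum_range_succ, Function.update_self, Finset.sum_congr rfl fun t ht =>
      by rw [Function.update_of_ne (Finset.mem_range.1 ht).ne], ← hπ i j]
    have := hle i j
    omega

/-- Regularisation: `M` is the upper left block of the `k`-regular matrix
`[[M, k - rowsums], [k - colsums, Mᵀ]]` on `ι ⊕ ι`. -/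
theorem exists_perms_of_sum_le (k : ℕ) (M : ι → ι → ℕ)
    (hrow : ∀ i, ∑ j, M i j ≤ k) (hcol : ∀ j, ∑ i, M i j ≤ k) :
    ∃ π : ℕ → Equiv.Perm (ι ⊕ ι), ∀ i j,
      M i j = ∑ t ∈ Finset.range k, if π t (.inl i) = .inl j then 1 else 0 := by
  let N : ι ⊕ ι → ι ⊕ ι → ℕ
    | .inl i, .inl j => M i j
    | .inl i, .inr j => if i = j then k - ∑ j, M i j else 0
    | .inr i, .inl j => if i = j then k - ∑ i', M i' i else 0
    | .inr i, .inr j => M j i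
  obtain ⟨π, hπ⟩ := exists_perms_of_sum_eq k N
    (fun a => by
      rcases a with i | i
      · have := hrow i
        simp only [N, Fintype.sum_sum_type, Finset.sum_ite_eq, Finset.mem_univ, if_true]
        omega
      · have := hcol i
        simp only [N, Fintype.sum_sum_type, Finset.sum_ite_eq, Finset.mem_univ, if_true]
        omega)
    (fun b => by
      rcases b with j | j
      · have := hcol j
        simp only [N, Fintype.sum_sum_type, Finset.sum_ite_eq', Finset.mem_univ, if_true]
        omega
      · have := hrow j
        simp only [N, Fintype.sum_sum_type, Finset.sum_ite_eq', Finset.mem_univ, if_true]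
        omega)
  exact ⟨π, fun i j => hπ (.inl i) (.inl j)⟩

theorem exists_arcColoring {V : Type*} [Finite V] (D : V → V → Prop) {k : ℕ}
    (hout : ∀ v, outDeg D v ≤ k) (hin : ∀ v, inDeg D v ≤ k) :
    ∃ c : V → V → ℕ, (∀ v w, D v w → c v w < k) ∧
      (∀ v w w', D v w → D v w' → c v w = c v w' → w = w') ∧
      (∀ v v' w, D v w → D v' w → c v w = c v' w → v = v') := by
  classical
  have := Fintype.ofFinite V
  obtain ⟨π, hπ⟩ := exists_perms_of_sum_le k (fun v w => if D v w then 1 else 0)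
    (fun v => by simpa [outDeg, Finset.sum_boole, Set.ncard_eq_toFinset_card'] using hout v)
    (fun w => by simpa [inDeg, Finset.sum_boole, Set.ncard_eq_toFinset_card'] using hin w)
  have hcolor : ∀ v w, ∃ t, D v w → t < k ∧ π t (.inl v) = .inl w := by
    intro v w
    by_cases h : D v w
    · have : (∑ t ∈ Finset.range k, if π t (.inl v) = .inl w then 1 else 0) ≠ 0 := by
        rw [← hπ]
        simp [h]
      obtain ⟨t, ht, hne⟩ := Finset.exists_ne_zero_of_sum_ne_zero this
      exact ⟨t, fun _ => ⟨Finset.mem_range.1 ht, by simpa using hne⟩⟩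
    · exact ⟨0, fun h' => absurd h' h⟩
  choose c hc using hcolor
  refine ⟨c, fun v w h => (hc v w h).1, fun v w w' h h' he => ?_, fun v v' w h h' he => ?_⟩
  · have := (hc v w h).2
    rw [he, (hc v w' h').2] at this
    exact Sum.inl_injective this.symm
  · have := (hc v w h).2
    rw [he, ← (hc v' w h').2] at this
    exact Sum.inl_injective ((π _).injective this)

end Permutations

section Coloring

variable {V : Type*}

theorem finite_colorSet (n : ℕ) : (colorSet n).Finite :=
  (Set.finite_Icc (-n : ℤ) n).subset fun m hm => by
    simp only [colorSet, Set.mem_ofPred_eq] at hm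
    simp only [Set.mem_Icc]
    omega

theorem ncard_colorSet_le (n : ℕ) : (colorSet n).ncard ≤ n := by
  obtain ⟨m, rfl | rfl⟩ := Nat.even_or_odd' n
  · calc (colorSet (2 * m)).ncard ≤ ((Finset.Icc (-m : ℤ) m).erase 0 : Set ℤ).ncard := by
          refine Set.ncard_le_ncard (fun x hx => ?_) (Finset.finite_toSet _)
          simp only [colorSet, Set.mem_ofPred_eq] at hx
          simp only [Finset.coe_erase, Finset.coe_Icc, Set.mem_sdiff, Set.mem_Icc,
            Set.mem_singleton_iff]
          have := hx.2 (even_two_mul m)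
          omega
      _ = 2 * m := by
          rw [Set.ncard_coe_finset, Finset.card_erase_of_mem (by simp), Int.card_Icc]
          omega
  · calc (colorSet (2 * m + 1)).ncard ≤ (Finset.Icc (-m : ℤ) m : Set ℤ).ncard := by
          refine Set.ncard_le_ncard (fun x hx => ?_) (Finset.finite_toSet _)
          simp only [colorSet, Set.mem_ofPred_eq] at hx
          simp only [Finset.coe_Icc, Set.mem_Icc]
          omega
      _ ≤ 2 * m + 1 := by
          rw [Set.ncard_coe_finset, Int.card_Icc]
          omega

theorem Colorable.deg_le {G : SimpleGraph V} {σ : Sym2 V → ℤ} {n : ℕ} (h : Colorable G σ n)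
    (v : V) : deg G v ≤ n := by
  obtain ⟨f, hmem, -, hinj⟩ := h
  calc deg G v ≤ (colorSet n).ncard :=
        Set.ncard_le_ncard_of_injOn (fun w => f v s(v, w)) (fun w hw => hmem v w hw)
          (fun w hw w' hw' he => by_contra fun hne => hinj v w w' hw hw' hne he)
          (finite_colorSet n)
    _ ≤ n := ncard_colorSet_le n

theorem colorable_of_forall_adj {G : SimpleGraph V} {σ : Sym2 V → ℤ} {n : ℕ} (g : V → V → ℤ)
    (hmem : ∀ u v, G.Adj u v → g u v ∈ colorSet n)
    (hsign : ∀ u v, G.Adj u v → g u v = -σ s(u, v) * g v u)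
    (hinj : ∀ u v w, G.Adj u v → G.Adj u w → v ≠ w → g u v ≠ g u w) : Colorable G σ n := by
  classical
  let f : V → Sym2 V → ℤ := fun u e => if h : u ∈ e then g u (Sym2.Mem.other h) else 0
  have hf : ∀ u v, f u s(u, v) = g u v := fun u v => by
    simp only [f, dif_pos (Sym2.mem_mk_left u v)]
    rw [Sym2.congr_right.1 (Sym2.other_spec (Sym2.mem_mk_left u v))]
  have hf' : ∀ u v, f v s(u, v) = g v u := fun u v => by rw [Sym2.eq_swap, hf]
  refine ⟨f, fun u v h => ?_, fun u v h => ?_, fun u v w hv hw hvw => ?_⟩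
  · rw [hf]
    exact hmem u v h
  · rw [hf u v, hf' u v]
    exact hsign u v h
  · rw [hf u v, hf u w]
    exact hinj u v w hv hw hvw

theorem colorable_one_of_forall_deg_le [Finite V] {G : SimpleGraph V} {k : ℕ}
    (hdeg : ∀ v, deg G v ≤ 2 * k) : Colorable G (fun _ => 1) (2 * k) := by
  classical
  obtain ⟨D, hD, hbal⟩ := exists_almostBalanced_orientation G
  have hdeg' (v : V) := hD.outDeg_add_inDeg v ▸ hdeg v
  obtain ⟨c, hck, hcout, hcin⟩ := exists_arcColoring D (k := k)
    (fun v => by have := hdeg' v; have := hbal v; omega)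
    (fun v => by have := hdeg' v; have := hbal v; omega)
  refine colorable_of_forall_adj (fun u w => if D u w then c u w + 1 else -(c w u + 1 : ℤ))
    (fun u w h => ?_) (fun u w h => ?_) (fun u v w hv hw hvw => ?_)
  · rcases (hD.adj_iff u w).1 h with huw | hwu
    · have := hck u w huw
      simp only [colorSet, if_pos huw, Set.mem_ofPred_eq]
      omega
    · have := hck w u hwu
      simp only [colorSet, if_neg (hD.asymm w u hwu), Set.mem_ofPred_eq]
      omega
  · rcases (hD.adj_iff u w).1 h with huw | hwu
    · simp [huw, hD.asymm u w huw]
    · simp [hwu, hD.asymm w u hwu]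
  · rcases (hD.adj_iff u v).1 hv with huv | hvu <;> rcases (hD.adj_iff u w).1 hw with huw | hwu
    · simp only [if_pos huv, if_pos huw]
      exact fun he => hvw (hcout u v w huv huw (by omega))
    · simp only [if_pos huv, if_neg (hD.asymm w u hwu)]
      omega
    · simp only [if_neg (hD.asymm v u hvu), if_pos huw]
      omega
    · simp only [if_neg (hD.asymm v u hvu), if_neg (hD.asymm w u hwu)]
      exact fun he => hvw (hcin v w u hvu hwu (by omega))

end Coloring

section MaxDegree

variable {V : Type*} [Fintype V] {G : SimpleGraph V}

theorem deg_eq_degree [DecidableRel G.Adj] (v : V) : deg G v = G.degree v := by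
  rw [deg, ← card_neighborSet_eq_degree, Set.ncard_eq_toFinset_card', Set.toFinset_card]

theorem deg_le_maxDeg (v : V) : deg G v ≤ maxDeg G := by
  classical
  rw [deg_eq_degree, maxDeg]
  convert G.degree_le_maxDegree v

theorem maxDeg_le_of_forall_deg_le {n : ℕ} (h : ∀ v, deg G v ≤ n) : maxDeg G ≤ n := by
  classical
  rw [maxDeg]
  convert G.maxDegree_le_of_forall_degree_le n fun v => deg_eq_degree (G := G) v ▸ h v

theorem chromIndex_eq_maxDeg_of_colorable {σ : Sym2 V → ℤ} (h : Colorable G σ (maxDeg G)) :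
    chromIndex G σ = maxDeg G :=
  le_antisymm (Nat.sInf_le h)
    (le_csInf ⟨_, h⟩ fun _ hn => maxDeg_le_of_forall_deg_le (Colorable.deg_le hn))

end MaxDegree

end Signed

/-- If `Δ(G)` is even then `G` is not of class `2^±`: the all-positive signature attains
`χ' = Δ(G)`. -/
theorem even_maxDeg_not_class2 {V : Type*} [Fintype V] (G : SimpleGraph V)
    (h : Even (maxDeg G)) :
    chromIndex G (fun _ => (1 : ℤ)) = maxDeg G ∧ ¬ Class2pm G := by
  obtain ⟨k, hk⟩ := h
  have hcol : Colorable G (fun _ => 1) (maxDeg G) := by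
    rw [hk, ← two_mul]
    exact colorable_one_of_forall_deg_le fun v => two_mul k ▸ hk ▸ deg_le_maxDeg v
  have hχ := chromIndex_eq_maxDeg_of_colorable hcol
  refine ⟨hχ, fun hclass => ?_⟩
  have := hclass _ fun _ _ => Or.inl rfl
  omega
end

section
/- If G is a graph with Δ(G) odd and G has a matching M with Δ(G \ M) < Δ(G), then the all-positive signed graph (G, 1) admits a Δ(G)-edge-coloring; hence G is not of class 2^±. -/
open SimpleGraph

open Signed SimpleGraph

/-!
Write `Δ(G) = 2k + 1`; then `H = G \ M` has maximum degree at most `2k`. The incidences of `H`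
can be coloured with the `2k` colours `±1, …, ±k` so that the two ends of every edge get opposite
colours and the colours at each vertex are distinct. The edges are coloured one at a time as in
König's proof for bipartite graphs: if `u` misses `a` and `v` misses `b`, and `-a` is present at
`v`, switching the `(-a, a)`/`(-b, b)` alternating chain from `v` frees `-a` at `v`, and it does
not create `a` at `u`. The matching edges then get colour `0` at both ends, which `M_Δ` allows
since `Δ` is odd. This is a `Δ`-colouring of `(G, 1)`, so `χ'(G, 1) ≤ Δ(G)`.
-/

namespace Signed

open Finset

variable {V : Type*} {S T : Finset (Sym2 V)} {C : Finset ℤ} {f g : V → Sym2 V → ℤ}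
  {u v w x : V} {e : Sym2 V} {a b c d : ℤ}

structure IsAntisymmColoring (S : Finset (Sym2 V)) (C : Finset ℤ) (f : V → Sym2 V → ℤ) :
    Prop where
  mem : ∀ e ∈ S, ∀ x ∈ e, f x e ∈ C
  antisymm : ∀ x y, s(x, y) ∈ S → f x s(x, y) = -f y s(x, y)
  proper : ∀ x, ∀ e ∈ S, ∀ e' ∈ S, x ∈ e → x ∈ e' → e ≠ e' → f x e ≠ f x e'

lemma IsAntisymmColoring.mono (hf : IsAntisymmColoring T C f) (h : S ⊆ T) :
    IsAntisymmColoring S C f :=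
  ⟨fun e he => hf.mem e (h he), fun x y hxy => hf.antisymm x y (h hxy),
    fun x e he e' he' => hf.proper x e (h he) e' (h he')⟩

def IsKempeRecolor (a b c d : ℤ) : Prop :=
  d = c ∨ (c = a ∧ d = -b) ∨ (c = -b ∧ d = a) ∨ (c = b ∧ d = -a) ∨ (c = -a ∧ d = b)

lemma IsKempeRecolor.symm (h : IsKempeRecolor a b c d) : IsKempeRecolor b a c d := by
  unfold IsKempeRecolor at *
  omega

lemma IsAntisymmColoring.ne_zero (hC0 : (0 : ℤ) ∉ C) (hf : IsAntisymmColoring S C f)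
    (he : e ∈ S) (hx : x ∈ e) : f x e ≠ 0 :=
  fun h => hC0 (h ▸ hf.mem e he x hx)

lemma IsAntisymmColoring.ne_of_mem (hC0 : (0 : ℤ) ∉ C) (hf : IsAntisymmColoring S C f)
    (h : s(u, v) ∈ S) : u ≠ v := by
  rintro rfl
  have := hf.antisymm u u h
  exact hf.ne_zero hC0 h (Sym2.mem_mk_left u u) (by omega)

section DecidableEq

variable [DecidableEq V]

def colorsAt (f : V → Sym2 V → ℤ) (S : Finset (Sym2 V)) (u : V) : Finset ℤ :=
  {e ∈ S | u ∈ e}.image (f u)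

lemma mem_colorsAt : c ∈ colorsAt f S u ↔ ∃ e ∈ S, u ∈ e ∧ f u e = c := by
  simp [colorsAt, and_assoc]

lemma colorsAt_mono (h : S ⊆ T) : colorsAt f S u ⊆ colorsAt f T u :=
  image_subset_image (filter_subset_filter _ h)

lemma card_colorsAt_le : #(colorsAt f S u) ≤ #{e ∈ S | u ∈ e} :=
  card_image_le

lemma IsAntisymmColoring.notMem_colorsAt_erase (hf : IsAntisymmColoring S C f) (he : e ∈ S)
    (hx : x ∈ e) : f x e ∉ colorsAt f (S.erase e) x := by
  rw [mem_colorsAt]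
  rintro ⟨e', he', hxe', hfe'⟩
  exact hf.proper x e' (mem_erase.1 he').2 e he hxe' hx (ne_of_mem_erase he') hfe'

def addEdge (f : V → Sym2 V → ℤ) (u v : V) (c : ℤ) : V → Sym2 V → ℤ :=
  fun x e => if e = s(u, v) then (if x = u then c else -c) else f x e

lemma addEdge_of_ne (h : e ≠ s(u, v)) : addEdge f u v c x e = f x e := if_neg h

lemma addEdge_left : addEdge f u v c u s(u, v) = c := by simp [addEdge]

lemma addEdge_right (huv : u ≠ v) : addEdge f u v c v s(u, v) = -c := by
  simp [addEdge, huv.symm]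

lemma mem_colorsAt_addEdge (huv : u ≠ v) (hS : s(u, v) ∉ S) :
    d ∈ colorsAt (addEdge f u v c) (insert s(u, v) S) w ↔
      (w = u ∧ c = d) ∨ (w = v ∧ -c = d) ∨ d ∈ colorsAt f S w := by
  have hS' : ∀ e ∈ S, e ≠ s(u, v) := fun e he h => hS (h ▸ he)
  simp only [mem_colorsAt, exists_mem_insert]
  constructor
  · rintro (⟨hw, hd⟩ | ⟨e, he, hwe, hd⟩)
    · rcases Sym2.mem_iff.1 hw with rfl | rfl
      · exact Or.inl ⟨rfl, by rwa [addEdge_left] at hd⟩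
      · exact Or.inr (Or.inl ⟨rfl, by rwa [addEdge_right huv] at hd⟩)
    · exact Or.inr (Or.inr ⟨e, he, hwe, by rwa [addEdge_of_ne (hS' e he)] at hd⟩)
  · rintro (⟨rfl, rfl⟩ | ⟨rfl, rfl⟩ | ⟨e, he, hwe, rfl⟩)
    · exact Or.inl ⟨Sym2.mem_mk_left _ _, addEdge_left⟩
    · exact Or.inl ⟨Sym2.mem_mk_right _ _, addEdge_right huv⟩
    · exact Or.inr ⟨e, he, hwe, addEdge_of_ne (hS' e he)⟩

lemma IsAntisymmColoring.addEdge (hf : IsAntisymmColoring S C f) (huv : u ≠ v)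
    (hS : s(u, v) ∉ S) (hc : c ∈ C) (hnc : -c ∈ C) (hcu : c ∉ colorsAt f S u)
    (hcv : -c ∉ colorsAt f S v) :
    IsAntisymmColoring (insert s(u, v) S) C (Signed.addEdge f u v c) := by
  have hS' : ∀ e ∈ S, e ≠ s(u, v) := fun e he h => hS (h ▸ he)
  have hnew : ∀ x ∈ s(u, v), ∀ e ∈ S, x ∈ e →
      Signed.addEdge f u v c x s(u, v) ≠ f x e := by
    rintro x hx e he hxe hfe
    rcases Sym2.mem_iff.1 hx with rfl | rfl
    · exact hcu (mem_colorsAt.2 ⟨e, he, hxe, by rw [← hfe, addEdge_left]⟩)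
    · exact hcv (mem_colorsAt.2 ⟨e, he, hxe, by rw [← hfe, addEdge_right huv]⟩)
  refine ⟨?_, ?_, ?_⟩
  · rintro e he x hx
    rcases mem_insert.1 he with rfl | he
    · rcases Sym2.mem_iff.1 hx with rfl | rfl
      · rwa [addEdge_left]
      · rwa [addEdge_right huv]
    · rw [addEdge_of_ne (hS' e he)]
      exact hf.mem e he x hx
  · intro x y hxy
    rcases mem_insert.1 hxy with h | hxy
    · rcases Sym2.eq_iff.1 h with ⟨rfl, rfl⟩ | ⟨rfl, rfl⟩
      · rw [addEdge_left, addEdge_right huv, neg_neg]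
      · rw [Sym2.eq_swap, addEdge_left, addEdge_right huv]
    · rw [addEdge_of_ne (hS' _ hxy), addEdge_of_ne (hS' _ hxy)]
      exact hf.antisymm x y hxy
  · intro x e he e' he' hxe hxe' hee'
    rcases mem_insert.1 he with rfl | he <;> rcases mem_insert.1 he' with rfl | he'
    · exact absurd rfl hee'
    · rw [addEdge_of_ne (hS' e' he')]
      exact hnew x hxe e' he' hxe'
    · rw [addEdge_of_ne (hS' e he)]
      exact (hnew x hxe' e he hxe).symm
    · rw [addEdge_of_ne (hS' e he), addEdge_of_ne (hS' e' he')]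
      exact hf.proper x e he e' he' hxe hxe' hee'

/-- What is needed of the colouring `g` obtained from `f` by switching, via `a ↔ -b`, `b ↔ -a`,
the chain from `v` whose edges are coloured `(-a, a)` and `(-b, b)` alternately (`-a` at `v`). -/
structure IsKempeSwitch (S : Finset (Sym2 V)) (C : Finset ℤ) (v : V) (a b : ℤ)
    (f g : V → Sym2 V → ℤ) : Prop where
  isAntisymmColoring : IsAntisymmColoring S C g
  recolor : ∀ e ∈ S, ∀ x ∈ e, IsKempeRecolor a b (f x e) (g x e)
  neg_notMem : -a ∉ colorsAt g S v
  mem_of_mem : ∀ w c, (c = a ∨ c = b) → c ∈ colorsAt g S w →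
    c ∈ colorsAt f S w ∨ (w = v ∧ c = b)

lemma IsKempeSwitch.refl (hf : IsAntisymmColoring S C f) (h : -a ∉ colorsAt f S v) :
    IsKempeSwitch S C v a b f f :=
  ⟨hf, fun _ _ _ _ => Or.inl rfl, h, fun _ _ _ h => Or.inl h⟩

lemma IsKempeSwitch.notMem_of_ne (hg : IsKempeSwitch S C v a b f g) (hw : w ≠ v)
    (hc : c = a ∨ c = b) (h : c ∉ colorsAt f S w) : c ∉ colorsAt g S w := fun hcg =>
  (hg.mem_of_mem w c hc hcg).elim h fun h => hw h.1

lemma IsKempeSwitch.mem_of_neg_mem (hg : IsKempeSwitch S C v a b f g) (hb : b ≠ 0)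
    (h : -b ∈ colorsAt g S w) : -b ∈ colorsAt f S w ∨ a ∈ colorsAt f S w := by
  obtain ⟨e, he, hwe, hge⟩ := mem_colorsAt.1 h
  have hrec := hg.recolor e he w hwe
  rw [hge] at hrec
  unfold IsKempeRecolor at hrec
  rcases (by omega : f w e = -b ∨ f w e = a) with hfe | hfe
  · exact .inl (mem_colorsAt.2 ⟨e, he, hwe, hfe⟩)
  · exact .inr (mem_colorsAt.2 ⟨e, he, hwe, hfe⟩)

lemma IsKempeSwitch.cons {v₁ : V} (hC0 : (0 : ℤ) ∉ C) (hCneg : ∀ c ∈ C, -c ∈ C)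
    (hf : IsAntisymmColoring S C f) (he : s(v, v₁) ∈ S) (hfv : f v s(v, v₁) = -a)
    (hb : b ∈ C) (hab : b ≠ -a) (hbv : b ∉ colorsAt f S v)
    (hg : IsKempeSwitch (S.erase s(v, v₁)) C v₁ b a f g) :
    IsKempeSwitch S C v a b f (addEdge g v v₁ b) := by
  have hfv₁ : f v₁ s(v, v₁) = a := by have := hf.antisymm v v₁ he; omega
  have ha0 : a ≠ 0 := by
    have := hf.ne_zero hC0 he (Sym2.mem_mk_left v v₁)
    omega
  have hb0 : b ≠ 0 := fun h => hC0 (h ▸ hb)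
  have hvv₁ : v ≠ v₁ := hf.ne_of_mem hC0 he
  have hS := notMem_erase s(v, v₁) S
  have hbgv : b ∉ colorsAt g (S.erase s(v, v₁)) v :=
    hg.notMem_of_ne hvv₁ (Or.inl rfl) fun h => hbv (colorsAt_mono (erase_subset _ _) h)
  refine ⟨?_, ?_, ?_, ?_⟩
  · rw [← insert_erase he]
    exact hg.isAntisymmColoring.addEdge hvv₁ hS hb (hCneg b hb) hbgv hg.neg_notMem
  · intro e he' x hx
    by_cases hev : e = s(v, v₁)
    · subst hev
      rcases Sym2.mem_iff.1 hx with rfl | rfl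
      · rw [addEdge_left, hfv]
        exact .inr (.inr (.inr (.inr ⟨rfl, rfl⟩)))
      · rw [addEdge_right hvv₁, hfv₁]
        exact .inr (.inl ⟨rfl, rfl⟩)
    · rw [addEdge_of_ne hev]
      exact (hg.recolor e (mem_erase.2 ⟨hev, he'⟩) x hx).symm
  · rw [← insert_erase he, mem_colorsAt_addEdge hvv₁ hS]
    rintro (⟨-, h⟩ | ⟨h, -⟩ | h)
    · exact hab h
    · exact hvv₁ h
    · rcases hg.mem_of_neg_mem ha0 h with h | h
      · exact hf.notMem_colorsAt_erase he (Sym2.mem_mk_left v v₁) (hfv ▸ h)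
      · exact hbv (colorsAt_mono (erase_subset _ _) h)
  · intro w c hc h
    rw [← insert_erase he, mem_colorsAt_addEdge hvv₁ hS] at h
    rcases h with ⟨rfl, rfl⟩ | ⟨rfl, rfl⟩ | h
    · exact Or.inr ⟨rfl, rfl⟩
    · omega
    · rcases hg.mem_of_mem w c hc.symm h with h | ⟨rfl, rfl⟩
      · exact Or.inl (colorsAt_mono (erase_subset _ _) h)
      · exact Or.inl (mem_colorsAt.2 ⟨_, he, Sym2.mem_mk_right v w, hfv₁⟩)

theorem IsAntisymmColoring.exists_isKempeSwitch (hC0 : (0 : ℤ) ∉ C) (hCneg : ∀ c ∈ C, -c ∈ C)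
    (hf : IsAntisymmColoring S C f) (hb : b ∈ C) (hab : b ≠ -a) (hbv : b ∉ colorsAt f S v) :
    ∃ g, IsKempeSwitch S C v a b f g := by
  induction S using Finset.strongInduction generalizing f v a b with
  | H S ih =>
  by_cases h : -a ∈ colorsAt f S v
  · obtain ⟨e, he, hve, hfe⟩ := mem_colorsAt.1 h
    obtain ⟨v₁, rfl⟩ : ∃ v₁, s(v, v₁) = e := ⟨_, Sym2.other_spec hve⟩
    have hfv₁ : f v₁ s(v, v₁) = a := by have := hf.antisymm v v₁ he; omega
    have hav₁ : a ∉ colorsAt f (S.erase s(v, v₁)) v₁ :=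
      hfv₁ ▸ hf.notMem_colorsAt_erase he (Sym2.mem_mk_right v v₁)
    obtain ⟨g, hg⟩ := ih _ (erase_ssubset he) (hf.mono (erase_subset _ _))
      (hfv₁ ▸ hf.mem _ he v₁ (Sym2.mem_mk_right v v₁)) (show a ≠ -b by omega) hav₁
    exact ⟨_, hg.cons hC0 hCneg hf he hfe hb hab hbv⟩
  · exact ⟨f, .refl hf h⟩

lemma IsAntisymmColoring.exists_insert (hC0 : (0 : ℤ) ∉ C) (hCneg : ∀ c ∈ C, -c ∈ C)
    (hf : IsAntisymmColoring S C f) (huv : u ≠ v) (hS : s(u, v) ∉ S)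
    (hu : #(colorsAt f S u) < #C) (hv : #(colorsAt f S v) < #C) :
    ∃ g, IsAntisymmColoring (insert s(u, v) S) C g := by
  obtain ⟨a, ha, hau⟩ := exists_mem_notMem_of_card_lt_card hu
  obtain ⟨b, hb, hbv⟩ := exists_mem_notMem_of_card_lt_card hv
  by_cases hab : b = -a
  · subst hab
    exact ⟨_, hf.addEdge huv hS ha hb hau hbv⟩
  · obtain ⟨g, hg⟩ := hf.exists_isKempeSwitch hC0 hCneg hb hab hbv
    exact ⟨_, hg.isAntisymmColoring.addEdge huv hS ha (hCneg a ha)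
      (hg.notMem_of_ne huv (Or.inl rfl) hau) hg.neg_notMem⟩

theorem exists_isAntisymmColoring [Fintype V] (hC0 : (0 : ℤ) ∉ C) (hCneg : ∀ c ∈ C, -c ∈ C)
    (H : SimpleGraph V) [DecidableRel H.Adj] (hdeg : ∀ v, H.degree v ≤ #C) :
    ∃ f, IsAntisymmColoring H.edgeFinset C f := by
  suffices ∀ S ⊆ H.edgeFinset, ∃ f, IsAntisymmColoring S C f from this _ Subset.rfl
  intro S
  induction S using Finset.induction_on with
  | empty => exact fun _ => ⟨fun _ _ => 0, by simp, by simp, by simp⟩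
  | insert e S he ih =>
    induction e with | _ u v =>
    intro hsub
    obtain ⟨f, hf⟩ := ih (insert_subset_iff.1 hsub).2
    have hadj : H.Adj u v := by simpa using (insert_subset_iff.1 hsub).1
    have hlt : ∀ w ∈ s(u, v), #(colorsAt f S w) < #C := fun w hw =>
      calc #(colorsAt f S w) ≤ #{e ∈ S | w ∈ e} := card_colorsAt_le
        _ < #{e ∈ insert s(u, v) S | w ∈ e} := by
          rw [filter_insert, if_pos hw]
          exact card_lt_card (ssubset_insert fun h => he (mem_filter.1 h).1)
        _ ≤ #{e ∈ H.edgeFinset | w ∈ e} := card_le_card (filter_subset_filter _ hsub)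
        _ = H.degree w := by
          rw [← incidenceFinset_eq_filter, card_incidenceFinset_eq_degree]
        _ ≤ #C := hdeg w
    exact hf.exists_insert hC0 hCneg hadj.ne he (hlt u (Sym2.mem_mk_left u v))
      (hlt v (Sym2.mem_mk_right u v))

end DecidableEq

noncomputable def symmColors (k : ℕ) : Finset ℤ :=
  (Icc (-(k : ℤ)) k).erase 0

lemma mem_symmColors {k : ℕ} {c : ℤ} : c ∈ symmColors k ↔ c ≠ 0 ∧ c.natAbs ≤ k := by
  simp only [symmColors, mem_erase, mem_Icc]
  omega

lemma card_symmColors (k : ℕ) : #(symmColors k) = 2 * k := by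
  rw [symmColors, card_erase_of_mem (by simp), Int.card_Icc]
  omega

lemma zero_notMem_symmColors (k : ℕ) : (0 : ℤ) ∉ symmColors k := by
  simp [mem_symmColors]

lemma neg_mem_symmColors {k : ℕ} : ∀ c ∈ symmColors k, -c ∈ symmColors k := by
  simp [mem_symmColors]

lemma coe_symmColors_subset (k : ℕ) : ↑(symmColors k) ⊆ colorSet (2 * k + 1) \ {0} := by
  intro c hc
  rw [mem_coe, mem_symmColors] at hc
  simp only [colorSet, Set.mem_sdiff, Set.mem_ofPred_eq, Set.mem_singleton_iff]
  omega

theorem IsAntisymmColoring.colorable_of_isMatchingSet {G : SimpleGraph V} {M : Set (Sym2 V)}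
    (hM : IsMatchingSet G M) {n : ℕ} (hn : Odd n) (hf : IsAntisymmColoring S C f)
    (hC : ↑C ⊆ colorSet n \ {0})
    (hS : ∀ u v, G.Adj u v → s(u, v) ∉ M → s(u, v) ∈ S) :
    Colorable G (fun _ => 1) n := by
  classical
  have hmem : ∀ u v, G.Adj u v → s(u, v) ∉ M → f u s(u, v) ∈ colorSet n \ {0} :=
    fun u v huv hm => hC (hf.mem _ (hS u v huv hm) u (Sym2.mem_mk_left u v))
  refine ⟨fun x e => if e ∈ M then 0 else f x e, ?_, ?_, ?_⟩
  · intro u v huv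
    dsimp only
    split_ifs with hm
    · exact ⟨by simp, fun h _ => Nat.not_even_iff_odd.2 hn h⟩
    · exact (hmem u v huv hm).1
  · intro u v huv
    dsimp only
    split_ifs with hm
    · simp
    · rw [hf.antisymm u v (hS u v huv hm)]
      ring
  · intro u v w huv huw hvw
    have hne : s(u, v) ≠ s(u, w) := fun h => hvw (Sym2.congr_right.1 h)
    dsimp only
    split_ifs with hmv hmw hmw
    · exact absurd (hM.2 _ hmv _ hmw u (Sym2.mem_mk_left u v) (Sym2.mem_mk_left u w)) hne
    · exact fun h => (hmem u w huw hmw).2 h.symm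
    · exact (hmem u v huv hmv).2
    · exact hf.proper u _ (hS u v huv hmv) _ (hS u w huw hmw) (Sym2.mem_mk_left u v)
        (Sym2.mem_mk_left u w) hne

lemma degree_le_maxDeg [Fintype V] (H : SimpleGraph V) [DecidableRel H.Adj] (v : V) :
    H.degree v ≤ maxDeg H := by
  unfold maxDeg
  convert H.degree_le_maxDegree v

lemma not_class2pm_of_colorable [Fintype V] {G : SimpleGraph V} {σ : Sym2 V → ℤ}
    (hσ : IsSignature G σ) (h : Colorable G σ (maxDeg G)) : ¬ Class2pm G := fun hG => by
  have hle : chromIndex G σ ≤ maxDeg G := Nat.sInf_le h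
  have := hG σ hσ
  omega

end Signed

/-- If `Δ(G)` is odd and some matching `M` satisfies `Δ(G \ M) < Δ(G)`, then the
all-positive signed graph is `Δ(G)`-edge-colorable; hence `G` is not of class `2^±`. -/
theorem not_class2_of_matching {V : Type*} [Fintype V] (G : SimpleGraph V)
    (hodd : Odd (maxDeg G))
    (hM : ∃ M : Set (Sym2 V), IsMatchingSet G M ∧ maxDeg (G.deleteEdges M) < maxDeg G) :
    Colorable G (fun _ => (1 : ℤ)) (maxDeg G) ∧ ¬ Class2pm G := by
  classical
  obtain ⟨M, hM, hlt⟩ := hM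
  obtain ⟨k, hk⟩ := hodd
  obtain ⟨f, hf⟩ := exists_isAntisymmColoring (zero_notMem_symmColors k) neg_mem_symmColors
    (G.deleteEdges M) fun v => by
      have := degree_le_maxDeg (G.deleteEdges M) v
      rw [card_symmColors]
      omega
  have hcol : Colorable G (fun _ => (1 : ℤ)) (maxDeg G) := by
    rw [hk]
    refine hf.colorable_of_isMatchingSet hM (odd_two_mul_add_one k) (coe_symmColors_subset k) ?_
    intro u v huv hm
    simpa using ⟨huv, hm⟩
  exact ⟨hcol, not_class2pm_of_colorable (fun _ _ => Or.inl rfl) hcol⟩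
end

section
/- For odd n = 2k+1 with k ≥ 2, the wheel W_n decomposes into exactly k pairwise edge-disjoint paths; consequently W_n is of class 1^± (every signed wheel on an even cycle rim is Δ-edge-colorable). -/
open SimpleGraph

open Signed SimpleGraph


/-- The relation defining the wheel with rim of length `m`: vertex `none` is the hub,
`some i` the rim vertices. -/
def WheelRel (m : ℕ) : Option (Fin m) → Option (Fin m) → Prop
  | none, some _ => True
  | some i, some j => j.val = (i.val + 1) % m
  | _, _ => False

/-- The wheel graph with rim cycle of length `m` (so `n = m + 1` vertices). -/
def Wheel (m : ℕ) : SimpleGraph (Option (Fin m)) :=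
  SimpleGraph.fromRel (WheelRel m)

namespace WP

abbrev Vk (k : ℕ) := Option (Fin (2 * k))

def nx {k : ℕ} (a : Fin (2 * k)) : Fin (2 * k) :=
  ⟨(a.val + 1) % (2 * k), Nat.mod_lt _ (Nat.lt_of_le_of_lt (Nat.zero_le _) a.isLt)⟩

def lo {k : ℕ} (j : Fin (2 * k)) : Fin (2 * k) :=
  ⟨j.val % k, by
    have h := j.isLt
    have hk : 0 < k := by omega
    have := Nat.mod_lt j.val hk
    omega⟩

def hi {k : ℕ} (j : Fin (2 * k)) : Fin (2 * k) :=
  ⟨j.val % k + k, by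
    have h := j.isLt
    have hk : 0 < k := by omega
    have := Nat.mod_lt j.val hk
    omega⟩

def prv {k : ℕ} (a : Fin (2 * k)) : Fin (2 * k) :=
  ⟨(a.val + (2 * k - 1)) % (2 * k), Nat.mod_lt _ (by have := a.isLt; omega)⟩

def spokeE {k : ℕ} (a : Fin (2 * k)) : Sym2 (Vk k) := s(none, some a)
def rimE {k : ℕ} (a : Fin (2 * k)) : Sym2 (Vk k) := s(some a, some (nx a))

lemma modk {k x : ℕ} (hx : x < 2 * k) :
    (x % k = x ∧ x < k) ∨ (x % k = x - k ∧ k ≤ x) := by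
  rcases Nat.lt_or_ge x k with h | h
  · exact Or.inl ⟨Nat.mod_eq_of_lt h, h⟩
  · refine Or.inr ⟨?_, h⟩
    rw [Nat.mod_eq_sub_mod h, Nat.mod_eq_of_lt (by omega)]

lemma mod2k {k x : ℕ} (hk : 0 < k) (hx : x < 4 * k) :
    (x % (2 * k) = x ∧ x < 2 * k) ∨ (x % (2 * k) = x - 2 * k ∧ 2 * k ≤ x) := by
  rcases Nat.lt_or_ge x (2 * k) with h | h
  · exact Or.inl ⟨Nat.mod_eq_of_lt h, h⟩
  · refine Or.inr ⟨?_, h⟩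
    rw [Nat.mod_eq_sub_mod h, Nat.mod_eq_of_lt (by omega)]

lemma nx_val {k : ℕ} (a : Fin (2 * k)) : (nx a).val = (a.val + 1) % (2 * k) := rfl

lemma nx_ne {k : ℕ} (a : Fin (2 * k)) : nx a ≠ a := by
  have h := a.isLt
  have hk : 0 < k := by omega
  intro hEq
  have hv : (a.val + 1) % (2 * k) = a.val := congrArg Fin.val hEq
  rcases mod2k hk (x := a.val + 1) (by omega) with ⟨h1, h2⟩ | ⟨h1, h2⟩ <;> omega

lemma nx_inj {k : ℕ} {a b : Fin (2 * k)} (h : nx a = nx b) : a = b := by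
  have ha := a.isLt; have hb := b.isLt
  have hk : 0 < k := by omega
  have hv : (a.val + 1) % (2 * k) = (b.val + 1) % (2 * k) := congrArg Fin.val h
  apply Fin.ext
  rcases mod2k hk (x := a.val + 1) (by omega) with ⟨h1, h2⟩ | ⟨h1, h2⟩ <;>
    rcases mod2k hk (x := b.val + 1) (by omega) with ⟨h3, h4⟩ | ⟨h3, h4⟩ <;> omega

lemma nx_nx_ne {k : ℕ} (hk : 2 ≤ k) (a : Fin (2 * k)) : nx (nx a) ≠ a := by
  have ha := a.isLt
  intro hEq
  have hv : ((a.val + 1) % (2 * k) + 1) % (2 * k) = a.val := congrArg Fin.val hEq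
  rcases mod2k (k := k) (by omega) (x := a.val + 1) (by omega) with ⟨h1, h2⟩ | ⟨h1, h2⟩ <;>
    rw [h1] at hv
  · rcases mod2k (k := k) (by omega) (x := a.val + 1 + 1) (by omega) with ⟨h3, h4⟩ | ⟨h3, h4⟩ <;> omega
  · rcases mod2k (k := k) (by omega) (x := a.val + 1 - 2 * k + 1) (by omega) with ⟨h3, h4⟩ | ⟨h3, h4⟩ <;> omega

lemma nx_prv {k : ℕ} (a : Fin (2 * k)) : nx (prv a) = a := by
  have ha := a.isLt
  have hk : 0 < k := by omega
  apply Fin.ext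
  show ((a.val + (2 * k - 1)) % (2 * k) + 1) % (2 * k) = a.val
  rcases mod2k hk (x := a.val + (2 * k - 1)) (by omega) with ⟨h1, h2⟩ | ⟨h1, h2⟩ <;>
    rw [h1]
  · rcases mod2k (k := k) hk (x := a.val + (2 * k - 1) + 1) (by omega) with ⟨h3, h4⟩ | ⟨h3, h4⟩ <;> omega
  · rcases mod2k (k := k) hk (x := a.val + (2 * k - 1) - 2 * k + 1) (by omega) with ⟨h3, h4⟩ | ⟨h3, h4⟩ <;> omega

lemma prv_ne_nx {k : ℕ} (hk : 2 ≤ k) (a : Fin (2 * k)) : prv a ≠ nx a := by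
  have ha := a.isLt
  intro hEq
  have hv : (a.val + (2 * k - 1)) % (2 * k) = (a.val + 1) % (2 * k) := congrArg Fin.val hEq
  rcases mod2k (by omega : (0:ℕ) < k) (x := a.val + (2 * k - 1)) (by omega) with ⟨h1, h2⟩ | ⟨h1, h2⟩ <;>
    rcases mod2k (by omega : (0:ℕ) < k) (x := a.val + 1) (by omega) with ⟨h3, h4⟩ | ⟨h3, h4⟩ <;> omega

lemma wheel_adj {k : ℕ} (hk : 2 ≤ k) {u v : Vk k} :
    (Wheel (2 * k)).Adj u v ↔
      (∃ j, u = none ∧ v = some j) ∨ (∃ j, u = some j ∧ v = none) ∨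
      (∃ a, u = some a ∧ v = some (nx a)) ∨ (∃ a, u = some (nx a) ∧ v = some a) := by
  rw [Wheel, SimpleGraph.fromRel_adj]
  constructor
  · rintro ⟨hne, h | h⟩
    · match u, v with
      | none, some j => exact Or.inl ⟨j, rfl, rfl⟩
      | some i, some j =>
        refine Or.inr (Or.inr (Or.inl ⟨i, rfl, ?_⟩))
        have : j = nx i := Fin.ext h
        rw [this]
      | none, none => exact absurd rfl hne
      | some i, none => exact absurd h id
    · match u, v with
      | some j, none => exact Or.inr (Or.inl ⟨j, rfl, rfl⟩)
      | some i, some j =>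
        refine Or.inr (Or.inr (Or.inr ⟨j, ?_, rfl⟩))
        have : i = nx j := Fin.ext h
        rw [this]
      | none, none => exact absurd rfl hne
      | none, some j => exact absurd h id
  · rintro (⟨j, rfl, rfl⟩ | ⟨j, rfl, rfl⟩ | ⟨a, rfl, rfl⟩ | ⟨a, rfl, rfl⟩)
    · exact ⟨by simp, Or.inl trivial⟩
    · exact ⟨by simp, Or.inr trivial⟩
    · exact ⟨by simp [(nx_ne a).symm], Or.inl rfl⟩
    · exact ⟨by simp [nx_ne a], Or.inr rfl⟩

lemma spoke_adj {k : ℕ} (hk : 2 ≤ k) (a : Fin (2 * k)) :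
    (Wheel (2 * k)).Adj none (some a) := (wheel_adj hk).mpr (Or.inl ⟨a, rfl, rfl⟩)

lemma rim_adj {k : ℕ} (hk : 2 ≤ k) (a : Fin (2 * k)) :
    (Wheel (2 * k)).Adj (some a) (some (nx a)) :=
  (wheel_adj hk).mpr (Or.inr (Or.inr (Or.inl ⟨a, rfl, rfl⟩)))

lemma spoke_mem {k : ℕ} (hk : 2 ≤ k) (a : Fin (2 * k)) :
    spokeE a ∈ (Wheel (2 * k)).edgeSet := (spoke_adj hk a)

lemma rim_mem {k : ℕ} (hk : 2 ≤ k) (a : Fin (2 * k)) :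
    rimE a ∈ (Wheel (2 * k)).edgeSet := (rim_adj hk a)

end WP
namespace WP

open Signed

/-! ### sign algebra -/

def PM (s : ℤ) : Prop := s = 1 ∨ s = -1

lemma PM.one : PM 1 := Or.inl rfl

lemma PM.neg {s : ℤ} (h : PM s) : PM (-s) := by rcases h with h | h <;> simp [PM, h]

lemma PM.mul {s t : ℤ} (hs : PM s) (ht : PM t) : PM (s * t) := by
  rcases hs with h | h <;> rcases ht with h' | h' <;> simp [PM, h, h']

lemma PM.natAbs_mul {s : ℤ} (hs : PM s) (x : ℤ) : (s * x).natAbs = x.natAbs := by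
  rcases hs with h | h <;> simp [h]

lemma PM.mul_mem {s x : ℤ} {n : ℕ} (hs : PM s) (hx : x ∈ colorSet n) :
    s * x ∈ colorSet n := by
  obtain ⟨h1, h2⟩ := hx
  refine ⟨by rwa [hs.natAbs_mul], fun he => ?_⟩
  have := h2 he
  rcases hs with h | h <;> simp [h] <;> exact this

/-! ### the coloring -/

def col {k : ℕ} (j : Fin (2 * k)) : ℤ := ((j.val % k : ℕ) : ℤ) + 1

lemma col_natAbs {k : ℕ} (j : Fin (2 * k)) : (col j).natAbs = j.val % k + 1 := by
  simp [col]; omega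

lemma col_pos {k : ℕ} (j : Fin (2 * k)) : 0 < col j := by
  simp [col]; omega

lemma col_eq_of_mod {k : ℕ} {j j' : Fin (2 * k)} (h : j.val % k = j'.val % k) :
    col j = col j' := by simp [col, h]

lemma col_mem {k : ℕ} (j : Fin (2 * k)) : col j ∈ colorSet (2 * k) := by
  have hj := j.isLt
  have hk : 0 < k := by omega
  have := Nat.mod_lt j.val hk
  refine ⟨by rw [col_natAbs]; omega, fun _ => ?_⟩
  have := col_pos j; omega

variable {k : ℕ}

def S1 (σ : Sym2 (Vk k) → ℤ) (j : Fin (2 * k)) : ℤ := σ (rimE (lo j))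
def S2 (σ : Sym2 (Vk k) → ℤ) (j : Fin (2 * k)) : ℤ := σ (spokeE (lo j))
def S3 (σ : Sym2 (Vk k) → ℤ) (j : Fin (2 * k)) : ℤ := σ (spokeE (hi j))
def S4 (σ : Sym2 (Vk k) → ℤ) (j : Fin (2 * k)) : ℤ := σ (rimE (hi j))

def AS (σ : Sym2 (Vk k) → ℤ) (j : Fin (2 * k)) : ℤ :=
  if j.val < k then -(S2 σ j * S1 σ j) else S2 σ j * S1 σ j
def BS (σ : Sym2 (Vk k) → ℤ) (j : Fin (2 * k)) : ℤ :=
  if j.val < k then S1 σ j else -(S3 σ j * S2 σ j * S1 σ j)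
def CS (σ : Sym2 (Vk k) → ℤ) (j : Fin (2 * k)) : ℤ :=
  if j.val < k then -(S1 σ j) else S3 σ j * S2 σ j * S1 σ j
def DS (σ : Sym2 (Vk k) → ℤ) (j : Fin (2 * k)) : ℤ :=
  if j.val < k then 1 else -(S4 σ j * S3 σ j * S2 σ j * S1 σ j)

def pv (σ : Sym2 (Vk k) → ℤ) : Vk k → Vk k → ℤ
  | none, some j => AS σ j * col j
  | some j, none => BS σ j * col j
  | some a, some b =>
      if b = nx a then CS σ a * col a else if a = nx b then DS σ b * col b else 0
  | none, none => 0

noncomputable def fc (σ : Sym2 (Vk k) → ℤ) (u : Vk k) (e : Sym2 (Vk k)) : ℤ :=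
  if h : u ∈ e then pv σ u (Sym2.Mem.other' h) else 0

lemma fc_spec (σ : Sym2 (Vk k) → ℤ) {u v : Vk k} (h : u ≠ v) : fc σ u s(u, v) = pv σ u v := by
  have hm : u ∈ s(u, v) := Sym2.mem_mk_left u v
  rw [fc, dif_pos hm]
  congr 1
  exact Sym2.congr_right.mp (Sym2.other_spec' hm)

lemma pm_S1 (σ : Sym2 (Vk k) → ℤ) (hk : 2 ≤ k) (hσ : IsSignature (Wheel (2 * k)) σ) (j : Fin (2 * k)) : PM (S1 σ j) := hσ _ (rim_mem hk _)
lemma pm_S2 (σ : Sym2 (Vk k) → ℤ) (hk : 2 ≤ k) (hσ : IsSignature (Wheel (2 * k)) σ) (j : Fin (2 * k)) : PM (S2 σ j) := hσ _ (spoke_mem hk _)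
lemma pm_S3 (σ : Sym2 (Vk k) → ℤ) (hk : 2 ≤ k) (hσ : IsSignature (Wheel (2 * k)) σ) (j : Fin (2 * k)) : PM (S3 σ j) := hσ _ (spoke_mem hk _)
lemma pm_S4 (σ : Sym2 (Vk k) → ℤ) (hk : 2 ≤ k) (hσ : IsSignature (Wheel (2 * k)) σ) (j : Fin (2 * k)) : PM (S4 σ j) := hσ _ (rim_mem hk _)

lemma pm_AS (σ : Sym2 (Vk k) → ℤ) (hk : 2 ≤ k) (hσ : IsSignature (Wheel (2 * k)) σ) (j : Fin (2 * k)) : PM (AS σ j) := by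
  unfold AS; split
  · exact ((pm_S2 σ hk hσ j).mul (pm_S1 σ hk hσ j)).neg
  · exact (pm_S2 σ hk hσ j).mul (pm_S1 σ hk hσ j)

lemma pm_BS (σ : Sym2 (Vk k) → ℤ) (hk : 2 ≤ k) (hσ : IsSignature (Wheel (2 * k)) σ) (j : Fin (2 * k)) : PM (BS σ j) := by
  unfold BS; split
  · exact pm_S1 σ hk hσ j
  · exact (((pm_S3 σ hk hσ j).mul (pm_S2 σ hk hσ j)).mul (pm_S1 σ hk hσ j)).neg

lemma pm_CS (σ : Sym2 (Vk k) → ℤ) (hk : 2 ≤ k) (hσ : IsSignature (Wheel (2 * k)) σ) (j : Fin (2 * k)) : PM (CS σ j) := by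
  unfold CS; split
  · exact (pm_S1 σ hk hσ j).neg
  · exact ((pm_S3 σ hk hσ j).mul (pm_S2 σ hk hσ j)).mul (pm_S1 σ hk hσ j)

lemma pm_DS (σ : Sym2 (Vk k) → ℤ) (hk : 2 ≤ k) (hσ : IsSignature (Wheel (2 * k)) σ) (j : Fin (2 * k)) : PM (DS σ j) := by
  unfold DS; split
  · exact PM.one
  · exact ((((pm_S4 σ hk hσ j).mul (pm_S3 σ hk hσ j)).mul (pm_S2 σ hk hσ j)).mul
      (pm_S1 σ hk hσ j)).neg

end WP
namespace WP

variable {k : ℕ}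

lemma lo_eq {j : Fin (2 * k)} (hj : j.val < k) : lo j = j :=
  Fin.ext (Nat.mod_eq_of_lt hj)

lemma hi_eq {j : Fin (2 * k)} (hj : ¬ j.val < k) : hi j = j := by
  apply Fin.ext
  show j.val % k + k = j.val
  rcases modk j.isLt with ⟨h1, h2⟩ | ⟨h1, h2⟩ <;> omega

lemma prv_ne (hk : 2 ≤ k) (a : Fin (2 * k)) : prv a ≠ a := by
  have ha := a.isLt
  intro hEq
  have hv : (a.val + (2 * k - 1)) % (2 * k) = a.val := congrArg Fin.val hEq
  rcases mod2k (show 0 < k by omega) (x := a.val + (2 * k - 1)) (by omega) with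
    ⟨h1, h2⟩ | ⟨h1, h2⟩ <;> omega

lemma prv_mod (hk : 2 ≤ k) (a : Fin (2 * k)) : (prv a).val % k ≠ a.val % k := by
  have ha := a.isLt
  have hp : (prv a).val = (a.val + (2 * k - 1)) % (2 * k) := rfl
  rcases mod2k (show 0 < k by omega) (x := a.val + (2 * k - 1)) (by omega) with
      ⟨h1, h2⟩ | ⟨h1, h2⟩ <;> rw [h1] at hp <;>
    rcases modk (prv a).isLt with ⟨h3, h4⟩ | ⟨h3, h4⟩ <;>
    rcases modk (show a.val < 2 * k from ha) with ⟨h5, h6⟩ | ⟨h5, h6⟩ <;> omega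

lemma pm_flip {s x y : ℤ} (hs : PM s) (h : x = -s * y) : y = -s * x := by
  rcases hs with h' | h' <;> subst h' <;> linarith

lemma rel_spoke (σ : Sym2 (Vk k) → ℤ) (hk : 2 ≤ k) (hσ : Signed.IsSignature (Wheel (2 * k)) σ)
    (j : Fin (2 * k)) : AS σ j * col j = -σ (spokeE j) * (BS σ j * col j) := by
  by_cases hj : j.val < k
  · have h2 : S2 σ j = σ (spokeE j) := by rw [S2, lo_eq hj]
    unfold AS BS
    rw [if_pos hj, if_pos hj, ← h2]; ring
  · have h3 : S3 σ j = σ (spokeE j) := by rw [S3, hi_eq hj]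
    unfold AS BS
    rw [if_neg hj, if_neg hj, ← h3]
    rcases pm_S3 σ hk hσ j with h | h <;> rw [h] <;> ring

lemma rel_spoke' (σ : Sym2 (Vk k) → ℤ) (hk : 2 ≤ k) (hσ : Signed.IsSignature (Wheel (2 * k)) σ)
    (j : Fin (2 * k)) : BS σ j * col j = -σ (spokeE j) * (AS σ j * col j) :=
  pm_flip (hσ _ (spoke_mem hk j)) (rel_spoke σ hk hσ j)

lemma rel_rim (σ : Sym2 (Vk k) → ℤ) (hk : 2 ≤ k) (hσ : Signed.IsSignature (Wheel (2 * k)) σ)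
    (a : Fin (2 * k)) : CS σ a * col a = -σ (rimE a) * (DS σ a * col a) := by
  by_cases hj : a.val < k
  · have h1 : S1 σ a = σ (rimE a) := by rw [S1, lo_eq hj]
    unfold CS DS
    rw [if_pos hj, if_pos hj, ← h1]; ring
  · have h4 : S4 σ a = σ (rimE a) := by rw [S4, hi_eq hj]
    unfold CS DS
    rw [if_neg hj, if_neg hj, ← h4]
    rcases pm_S4 σ hk hσ a with h | h <;> rw [h] <;> ring

lemma rel_rim' (σ : Sym2 (Vk k) → ℤ) (hk : 2 ≤ k) (hσ : Signed.IsSignature (Wheel (2 * k)) σ)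
    (a : Fin (2 * k)) : DS σ a * col a = -σ (rimE a) * (CS σ a * col a) :=
  pm_flip (hσ _ (rim_mem hk a)) (rel_rim σ hk hσ a)

lemma nat_AS (σ : Sym2 (Vk k) → ℤ) (hk : 2 ≤ k) (hσ : Signed.IsSignature (Wheel (2 * k)) σ)
    (j : Fin (2 * k)) : (AS σ j * col j).natAbs = j.val % k + 1 := by
  rw [(pm_AS σ hk hσ j).natAbs_mul, col_natAbs]

lemma nat_BS (σ : Sym2 (Vk k) → ℤ) (hk : 2 ≤ k) (hσ : Signed.IsSignature (Wheel (2 * k)) σ)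
    (j : Fin (2 * k)) : (BS σ j * col j).natAbs = j.val % k + 1 := by
  rw [(pm_BS σ hk hσ j).natAbs_mul, col_natAbs]

lemma nat_CS (σ : Sym2 (Vk k) → ℤ) (hk : 2 ≤ k) (hσ : Signed.IsSignature (Wheel (2 * k)) σ)
    (j : Fin (2 * k)) : (CS σ j * col j).natAbs = j.val % k + 1 := by
  rw [(pm_CS σ hk hσ j).natAbs_mul, col_natAbs]

lemma nat_DS (σ : Sym2 (Vk k) → ℤ) (hk : 2 ≤ k) (hσ : Signed.IsSignature (Wheel (2 * k)) σ)
    (j : Fin (2 * k)) : (DS σ j * col j).natAbs = j.val % k + 1 := by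
  rw [(pm_DS σ hk hσ j).natAbs_mul, col_natAbs]

lemma A_ne_aux (σ : Sym2 (Vk k) → ℤ) (hk : 2 ≤ k) (hσ : Signed.IsSignature (Wheel (2 * k)) σ)
    {a b : Fin (2 * k)} (hm : a.val % k = b.val % k) (ha : a.val < k) (hb : ¬ b.val < k) :
    AS σ a * col a ≠ AS σ b * col b := by
  have hlo : lo b = lo a := Fin.ext hm.symm
  have e1 : S1 σ b = S1 σ a := by unfold S1; rw [hlo]
  have e2 : S2 σ b = S2 σ a := by unfold S2; rw [hlo]
  have hcol : col b = col a := col_eq_of_mod hm.symm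
  unfold AS
  rw [if_pos ha, if_neg hb, e1, e2, hcol]
  intro hEq
  have hc := col_pos a
  rcases pm_S1 σ hk hσ a with h1 | h1 <;> rcases pm_S2 σ hk hσ a with h2 | h2 <;>
    rw [h1, h2] at hEq <;> norm_num at hEq <;> omega

lemma A_ne (σ : Sym2 (Vk k) → ℤ) (hk : 2 ≤ k) (hσ : Signed.IsSignature (Wheel (2 * k)) σ)
    {a b : Fin (2 * k)} (hne : a ≠ b) : AS σ a * col a ≠ AS σ b * col b := by
  by_cases hm : a.val % k = b.val % k
  · have ha := a.isLt; have hb := b.isLt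
    by_cases hak : a.val < k <;> by_cases hbk : b.val < k
    · exfalso; apply hne; apply Fin.ext
      rcases modk (show a.val < 2 * k from ha) with ⟨x1, x2⟩ | ⟨x1, x2⟩ <;>
        rcases modk (show b.val < 2 * k from hb) with ⟨y1, y2⟩ | ⟨y1, y2⟩ <;> omega
    · exact A_ne_aux σ hk hσ hm hak hbk
    · exact (A_ne_aux σ hk hσ hm.symm hbk hak).symm
    · exfalso; apply hne; apply Fin.ext
      rcases modk (show a.val < 2 * k from ha) with ⟨x1, x2⟩ | ⟨x1, x2⟩ <;>
        rcases modk (show b.val < 2 * k from hb) with ⟨y1, y2⟩ | ⟨y1, y2⟩ <;> omega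
  · intro hEq
    have hnat := congrArg Int.natAbs hEq
    rw [nat_AS σ hk hσ, nat_AS σ hk hσ] at hnat
    omega

lemma BC_ne (σ : Sym2 (Vk k) → ℤ) (hk : 2 ≤ k) (hσ : Signed.IsSignature (Wheel (2 * k)) σ)
    (a : Fin (2 * k)) : BS σ a * col a ≠ CS σ a * col a := by
  have hc := col_pos a
  unfold BS CS
  by_cases hak : a.val < k
  · rw [if_pos hak, if_pos hak]
    intro hEq
    rcases pm_S1 σ hk hσ a with h1 | h1 <;> rw [h1] at hEq <;> norm_num at hEq <;> omega
  · rw [if_neg hak, if_neg hak]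
    intro hEq
    rcases pm_S1 σ hk hσ a with h1 | h1 <;> rcases pm_S2 σ hk hσ a with h2 | h2 <;>
      rcases pm_S3 σ hk hσ a with h3 | h3 <;>
      rw [h1, h2, h3] at hEq <;> norm_num at hEq <;> omega

lemma BD_ne (σ : Sym2 (Vk k) → ℤ) (hk : 2 ≤ k) (hσ : Signed.IsSignature (Wheel (2 * k)) σ)
    (a : Fin (2 * k)) : BS σ a * col a ≠ DS σ (prv a) * col (prv a) := by
  intro hEq
  have hnat := congrArg Int.natAbs hEq
  rw [nat_BS σ hk hσ, nat_DS σ hk hσ] at hnat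
  exact prv_mod hk a (by omega)

lemma CD_ne (σ : Sym2 (Vk k) → ℤ) (hk : 2 ≤ k) (hσ : Signed.IsSignature (Wheel (2 * k)) σ)
    (a : Fin (2 * k)) : CS σ a * col a ≠ DS σ (prv a) * col (prv a) := by
  intro hEq
  have hnat := congrArg Int.natAbs hEq
  rw [nat_CS σ hk hσ, nat_DS σ hk hσ] at hnat
  exact prv_mod hk a (by omega)

end WP
namespace WP

variable {k : ℕ}

lemma pv_none_some (σ : Sym2 (Vk k) → ℤ) (j : Fin (2 * k)) :
    pv σ none (some j) = AS σ j * col j := rfl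

lemma pv_some_none (σ : Sym2 (Vk k) → ℤ) (j : Fin (2 * k)) :
    pv σ (some j) none = BS σ j * col j := rfl

lemma pv_some_some (σ : Sym2 (Vk k) → ℤ) (a b : Fin (2 * k)) :
    pv σ (some a) (some b) =
      if b = nx a then CS σ a * col a else if a = nx b then DS σ b * col b else 0 := rfl

lemma adj_none (hk : 2 ≤ k) {v : Vk k} (h : (Wheel (2 * k)).Adj none v) :
    ∃ j, v = some j := by
  rcases (wheel_adj hk).mp h with ⟨j, _, rfl⟩ | ⟨j, hj, _⟩ | ⟨a, ha, _⟩ | ⟨a, ha, _⟩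
  · exact ⟨j, rfl⟩
  · exact absurd hj (by simp)
  · exact absurd ha (by simp)
  · exact absurd ha (by simp)

lemma adj_some (hk : 2 ≤ k) {a : Fin (2 * k)} {v : Vk k}
    (h : (Wheel (2 * k)).Adj (some a) v) :
    v = none ∨ v = some (nx a) ∨ v = some (prv a) := by
  rcases (wheel_adj hk).mp h with ⟨j, hj, _⟩ | ⟨j, hj, rfl⟩ | ⟨b, hb, rfl⟩ | ⟨b, hb, rfl⟩
  · exact absurd hj (by simp)
  · exact Or.inl rfl
  · obtain rfl : a = b := Option.some.inj hb
    exact Or.inr (Or.inl rfl)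
  · have hab : a = nx b := Option.some.inj hb
    have : prv a = b := nx_inj (by rw [nx_prv, hab])
    exact Or.inr (Or.inr (by rw [this]))

lemma fB (σ : Sym2 (Vk k) → ℤ) (a : Fin (2 * k)) :
    fc σ (some a) s(some a, none) = BS σ a * col a := by
  rw [fc_spec σ (by simp), pv_some_none]

lemma fA (σ : Sym2 (Vk k) → ℤ) (j : Fin (2 * k)) :
    fc σ none s(none, some j) = AS σ j * col j := by
  rw [fc_spec σ (by simp), pv_none_some]

lemma fC (σ : Sym2 (Vk k) → ℤ) (a : Fin (2 * k)) :
    fc σ (some a) s(some a, some (nx a)) = CS σ a * col a := by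
  rw [fc_spec σ (by simp [(nx_ne a).symm]), pv_some_some, if_pos rfl]

lemma fD (σ : Sym2 (Vk k) → ℤ) (hk : 2 ≤ k) (a : Fin (2 * k)) :
    fc σ (some a) s(some a, some (prv a)) = DS σ (prv a) * col (prv a) := by
  rw [fc_spec σ (by simp [(prv_ne hk a).symm]), pv_some_some,
    if_neg (prv_ne_nx hk a), if_pos (nx_prv a).symm]

lemma fD' (σ : Sym2 (Vk k) → ℤ) (hk : 2 ≤ k) (a : Fin (2 * k)) :
    fc σ (some (nx a)) s(some (nx a), some a) = DS σ a * col a := by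
  have h1 : fc σ (some (nx a)) s(some (nx a), some a) = pv σ (some (nx a)) (some a) :=
    fc_spec σ (by simp [nx_ne a])
  rw [h1, pv_some_some, if_neg (fun h => nx_nx_ne hk a h.symm), if_pos rfl]

theorem wheel_colorable (σ : Sym2 (Vk k) → ℤ) (hk : 2 ≤ k)
    (hσ : Signed.IsSignature (Wheel (2 * k)) σ) :
    Signed.Colorable (Wheel (2 * k)) σ (2 * k) := by
  refine ⟨fc σ, ?_, ?_, ?_⟩
  · -- colors in colorSet
    intro u v huv
    rcases (wheel_adj hk).mp huv with ⟨j, rfl, rfl⟩ | ⟨j, rfl, rfl⟩ | ⟨a, rfl, rfl⟩ | ⟨a, rfl, rfl⟩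
    · rw [fA]; exact (pm_AS σ hk hσ j).mul_mem (col_mem j)
    · rw [fB]; exact (pm_BS σ hk hσ j).mul_mem (col_mem j)
    · rw [fC]; exact (pm_CS σ hk hσ a).mul_mem (col_mem a)
    · rw [fD' σ hk]; exact (pm_DS σ hk hσ a).mul_mem (col_mem a)
  · -- symmetry condition
    intro u v huv
    rcases (wheel_adj hk).mp huv with ⟨j, rfl, rfl⟩ | ⟨j, rfl, rfl⟩ | ⟨a, rfl, rfl⟩ | ⟨a, rfl, rfl⟩
    · rw [fA]
      have hv : fc σ (some j) s(none, some j) = BS σ j * col j := by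
        rw [Sym2.eq_swap]; exact fB σ j
      rw [hv]
      exact rel_spoke σ hk hσ j
    · rw [fB]
      have hv : fc σ none s(some j, none) = AS σ j * col j := by
        rw [Sym2.eq_swap]; exact fA σ j
      rw [hv, show (s(some j, none) : Sym2 (Vk k)) = spokeE j from Sym2.eq_swap]
      exact rel_spoke' σ hk hσ j
    · rw [fC]
      have hv : fc σ (some (nx a)) s(some a, some (nx a)) = DS σ a * col a := by
        rw [Sym2.eq_swap]; exact fD' σ hk a
      rw [hv]
      exact rel_rim σ hk hσ a
    · rw [fD' σ hk]
      have hv : fc σ (some a) s(some (nx a), some a) = CS σ a * col a := by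
        rw [Sym2.eq_swap]; exact fC σ a
      rw [hv, show (s(some (nx a), some a) : Sym2 (Vk k)) = rimE a from Sym2.eq_swap]
      exact rel_rim' σ hk hσ a
  · -- proper at each vertex
    intro u v w huv huw hvw
    match u with
    | none =>
      obtain ⟨j, rfl⟩ := adj_none hk huv
      obtain ⟨j', rfl⟩ := adj_none hk huw
      rw [fA, fA]
      exact A_ne σ hk hσ (fun h => hvw (by rw [h]))
    | some a =>
      rcases adj_some hk huv with rfl | rfl | rfl <;>
        rcases adj_some hk huw with rfl | rfl | rfl
      · exact absurd rfl hvw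
      · rw [fB, fC]; exact BC_ne σ hk hσ a
      · rw [fB, fD σ hk]; exact BD_ne σ hk hσ a
      · rw [fC, fB]; exact (BC_ne σ hk hσ a).symm
      · exact absurd rfl hvw
      · rw [fC, fD σ hk]; exact CD_ne σ hk hσ a
      · rw [fD σ hk, fB]; exact (BD_ne σ hk hσ a).symm
      · rw [fD σ hk, fC]; exact (CD_ne σ hk hσ a).symm
      · exact absurd rfl hvw

end WP
namespace WP

variable {k : ℕ}

lemma colorSet_encode (n : ℕ) :
    ∃ e : ℤ → ℕ, (∀ m ∈ Signed.colorSet n, e m < n) ∧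
      ∀ m ∈ Signed.colorSet n, ∀ m' ∈ Signed.colorSet n, e m = e m' → m = m' := by
  rcases Nat.even_or_odd n with ⟨t, ht⟩ | ⟨t, ht⟩
  · refine ⟨fun m => if 0 < m then (2 * m - 2).toNat else (-2 * m - 1).toNat, ?_, ?_⟩
    · rintro m ⟨h1, h2⟩
      have hm0 : m ≠ 0 := h2 ⟨t, ht⟩
      show (if 0 < m then (2 * m - 2).toNat else (-2 * m - 1).toNat) < n
      split <;> omega
    · rintro m ⟨h1, h2⟩ m' ⟨h1', h2'⟩ hEq
      have hm0 : m ≠ 0 := h2 ⟨t, ht⟩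
      have hm0' : m' ≠ 0 := h2' ⟨t, ht⟩
      have hEq' : (if 0 < m then (2 * m - 2).toNat else (-2 * m - 1).toNat) =
          (if 0 < m' then (2 * m' - 2).toNat else (-2 * m' - 1).toNat) := hEq
      split at hEq' <;> split at hEq' <;> omega
  · refine ⟨fun m => if 0 ≤ m then (2 * m).toNat else (-2 * m - 1).toNat, ?_, ?_⟩
    · rintro m ⟨h1, h2⟩
      show (if 0 ≤ m then (2 * m).toNat else (-2 * m - 1).toNat) < n
      split <;> omega
    · rintro m ⟨h1, h2⟩ m' ⟨h1', h2'⟩ hEq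
      have hEq' : (if 0 ≤ m then (2 * m).toNat else (-2 * m - 1).toNat) =
          (if 0 ≤ m' then (2 * m').toNat else (-2 * m' - 1).toNat) := hEq
      split at hEq' <;> split at hEq' <;> omega

lemma lower_bound (σ : Sym2 (Vk k) → ℤ) (hk : 2 ≤ k) {n : ℕ}
    (h : Signed.Colorable (Wheel (2 * k)) σ n) : 2 * k ≤ n := by
  obtain ⟨f, h1, h2, h3⟩ := h
  obtain ⟨e, he1, he2⟩ := colorSet_encode n
  have hmem : ∀ j : Fin (2 * k), f none s(none, some j) ∈ Signed.colorSet n :=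
    fun j => h1 none (some j) (spoke_adj hk j)
  have key : Function.Injective
      (fun j : Fin (2 * k) => (⟨e (f none s(none, some j)), he1 _ (hmem j)⟩ : Fin n)) := by
    intro j j' hjj
    have hEq : e (f none s(none, some j)) = e (f none s(none, some j')) :=
      congrArg Fin.val hjj
    have hf : f none s(none, some j) = f none s(none, some j') :=
      he2 _ (hmem j) _ (hmem j') hEq
    by_contra hne
    exact h3 none (some j) (some j') (spoke_adj hk j) (spoke_adj hk j')
      (by simpa using hne) hf
  calc 2 * k = Fintype.card (Fin (2 * k)) := (Fintype.card_fin _).symm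
    _ ≤ Fintype.card (Fin n) := Fintype.card_le_of_injective _ key
    _ = n := Fintype.card_fin _

lemma degree_hub (hk : 2 ≤ k) [inst : DecidableRel (Wheel (2 * k)).Adj] :
    (Wheel (2 * k)).degree none = 2 * k := by
  have hset : (Wheel (2 * k)).neighborFinset none =
      Finset.univ.map ⟨some, Option.some_injective _⟩ := by
    ext v
    simp only [SimpleGraph.mem_neighborFinset, Finset.mem_map, Finset.mem_univ,
      Function.Embedding.coeFn_mk, true_and]
    constructor
    · intro h; exact adj_none hk h |>.imp fun j hj => hj.symm
    · rintro ⟨j, rfl⟩; exact spoke_adj hk j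
  rw [SimpleGraph.degree, hset, Finset.card_map, Finset.card_univ, Fintype.card_fin]

lemma degree_rim (hk : 2 ≤ k) [inst : DecidableRel (Wheel (2 * k)).Adj] (a : Fin (2 * k)) :
    (Wheel (2 * k)).degree (some a) ≤ 3 := by
  have hsub : (Wheel (2 * k)).neighborFinset (some a) ⊆
      {none, some (nx a), some (prv a)} := by
    intro v hv
    rw [SimpleGraph.mem_neighborFinset] at hv
    rcases adj_some hk hv with rfl | rfl | rfl <;> simp
  calc (Wheel (2 * k)).degree (some a) ≤ ({none, some (nx a), some (prv a)} : Finset (Vk k)).card :=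
        Finset.card_le_card hsub
    _ ≤ 3 := by
        apply le_trans (Finset.card_insert_le _ _)
        apply Nat.succ_le_succ
        apply le_trans (Finset.card_insert_le _ _)
        simp

lemma maxDeg_wheel (hk : 2 ≤ k) : Signed.maxDeg (Wheel (2 * k)) = 2 * k := by
  letI inst : DecidableRel (Wheel (2 * k)).Adj := Classical.decRel _
  rw [Signed.maxDeg]
  apply le_antisymm
  · apply @SimpleGraph.maxDegree_le_of_forall_degree_le _ (Wheel (2 * k)) _ (Classical.decRel _)
    intro v
    match v with
    | none => exact le_of_eq (degree_hub hk)
    | some a => exact le_trans (degree_rim hk a) (by omega)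
  · have h2 := @SimpleGraph.degree_le_maxDegree _ (Wheel (2 * k)) _ (Classical.decRel _) none
    rwa [degree_hub hk] at h2

theorem wheel_class1 (hk : 2 ≤ k) : Signed.Class1pm (Wheel (2 * k)) := by
  intro σ hσ
  rw [maxDeg_wheel hk, Signed.chromIndex]
  apply le_antisymm
  · exact Nat.sInf_le (wheel_colorable σ hk hσ)
  · exact le_csInf ⟨2 * k, wheel_colorable σ hk hσ⟩ fun n hn => lower_bound σ hk hn

end WP
namespace WP

variable {k : ℕ}

def aI (i : Fin k) : Fin (2 * k) := ⟨i.val, by have := i.isLt; omega⟩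
def bI (i : Fin k) : Fin (2 * k) := ⟨i.val + k, by have := i.isLt; omega⟩

def ES (i : Fin k) : Set (Sym2 (Vk k)) :=
  {rimE (aI i), spokeE (aI i), spokeE (bI i), rimE (bI i)}

def DG (i : Fin k) : SimpleGraph (Vk k) := SimpleGraph.fromEdgeSet (ES i)

lemma ES_sub (hk : 2 ≤ k) (i : Fin k) : ES i ⊆ (Wheel (2 * k)).edgeSet := by
  intro e he
  rcases he with rfl | rfl | rfl | rfl
  · exact rim_mem hk _
  · exact spoke_mem hk _
  · exact spoke_mem hk _
  · exact rim_mem hk _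

lemma spokeE_inj {a b : Fin (2 * k)} (h : spokeE a = spokeE b) : a = b := by
  rw [spokeE, spokeE, Sym2.eq_iff] at h
  rcases h with ⟨_, h⟩ | ⟨h, _⟩
  · exact Option.some.inj h
  · exact absurd h (by simp)

lemma spokeE_ne_rimE (a b : Fin (2 * k)) : spokeE a ≠ rimE b := by
  intro h
  rw [spokeE, rimE, Sym2.eq_iff] at h
  rcases h with ⟨h, _⟩ | ⟨h, _⟩ <;> exact absurd h (by simp)

lemma rimE_inj (hk : 2 ≤ k) {a b : Fin (2 * k)} (h : rimE a = rimE b) : a = b := by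
  rw [rimE, rimE, Sym2.eq_iff] at h
  rcases h with ⟨h, _⟩ | ⟨h1, h2⟩
  · exact Option.some.inj h
  · exfalso
    have ha : a = nx b := Option.some.inj h1
    have hb : nx a = b := Option.some.inj h2
    have hv1 : a.val = (b.val + 1) % (2 * k) := congrArg Fin.val ha
    have hv2 : (a.val + 1) % (2 * k) = b.val := congrArg Fin.val hb
    have hak := a.isLt; have hbk := b.isLt
    rcases mod2k (show 0 < k by omega) (x := b.val + 1) (by omega) with ⟨u1, u2⟩ | ⟨u1, u2⟩ <;>
      rcases mod2k (show 0 < k by omega) (x := a.val + 1) (by omega) with ⟨w1, w2⟩ | ⟨w1, w2⟩ <;>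
      omega

lemma edgeSet_DG (hk : 2 ≤ k) (i : Fin k) : (DG i).edgeSet = ES i := by
  rw [DG, SimpleGraph.edgeSet_fromEdgeSet]
  ext e
  constructor
  · exact fun h => h.1
  · intro hmem
    refine ⟨hmem, ?_⟩
    rcases hmem with rfl | rfl | rfl | rfl
    · exact fun hdiag => (nx_ne (aI i)).symm (Option.some.inj (Sym2.mk_isDiag_iff.mp hdiag))
    · exact fun hdiag => absurd (Sym2.mk_isDiag_iff.mp hdiag) (by simp)
    · exact fun hdiag => absurd (Sym2.mk_isDiag_iff.mp hdiag) (by simp)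
    · exact fun hdiag => (nx_ne (bI i)).symm (Option.some.inj (Sym2.mk_isDiag_iff.mp hdiag))

lemma DG_le (hk : 2 ≤ k) (i : Fin k) : DG i ≤ Wheel (2 * k) := by
  intro u v huv
  rw [DG, SimpleGraph.fromEdgeSet_adj] at huv
  exact (SimpleGraph.mem_edgeSet _).mp (ES_sub hk i huv.1)

lemma DG_disjoint (hk : 2 ≤ k) {i j : Fin k} (hij : i ≠ j) :
    Disjoint ((DG i).edgeSet) ((DG j).edgeSet) := by
  rw [edgeSet_DG hk, edgeSet_DG hk]
  have hvij : i.val ≠ j.val := fun h => hij (Fin.ext h)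
  have hi := i.isLt; have hj := j.isLt
  rw [Set.disjoint_left]
  intro e hei hej
  have hval : ∀ x y : Fin k, (aI x).val = x.val ∧ (bI x).val = x.val + k := fun x y => ⟨rfl, rfl⟩
  rcases hei with rfl | rfl | rfl | rfl <;> rcases hej with h | h | h | h
  · have := congrArg Fin.val (rimE_inj hk h); simp only [aI, bI] at this; omega
  · exact spokeE_ne_rimE _ _ h.symm
  · exact spokeE_ne_rimE _ _ h.symm
  · have := congrArg Fin.val (rimE_inj hk h); simp only [aI, bI] at this; omega
  · exact spokeE_ne_rimE _ _ h
  · have := congrArg Fin.val (spokeE_inj h); simp only [aI, bI] at this; omega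
  · have := congrArg Fin.val (spokeE_inj h); simp only [aI, bI] at this; omega
  · exact spokeE_ne_rimE _ _ h
  · exact spokeE_ne_rimE _ _ h
  · have := congrArg Fin.val (spokeE_inj h); simp only [aI, bI] at this; omega
  · have := congrArg Fin.val (spokeE_inj h); simp only [aI, bI] at this; omega
  · exact spokeE_ne_rimE _ _ h
  · have := congrArg Fin.val (rimE_inj hk h); simp only [aI, bI] at this; omega
  · exact spokeE_ne_rimE _ _ h.symm
  · exact spokeE_ne_rimE _ _ h.symm
  · have := congrArg Fin.val (rimE_inj hk h); simp only [aI, bI] at this; omega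

lemma edge_cases (hk : 2 ≤ k) {e : Sym2 (Vk k)} (he : e ∈ (Wheel (2 * k)).edgeSet) :
    (∃ j, e = spokeE j) ∨ (∃ j, e = rimE j) := by
  induction e using Sym2.ind with
  | _ u v =>
    rw [SimpleGraph.mem_edgeSet] at he
    rcases (wheel_adj hk).mp he with ⟨j, rfl, rfl⟩ | ⟨j, rfl, rfl⟩ | ⟨a, rfl, rfl⟩ | ⟨a, rfl, rfl⟩
    · exact Or.inl ⟨j, rfl⟩
    · exact Or.inl ⟨j, Sym2.eq_swap⟩
    · exact Or.inr ⟨a, rfl⟩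
    · exact Or.inr ⟨a, Sym2.eq_swap⟩

lemma DG_union (hk : 2 ≤ k) : (⋃ i, (DG i).edgeSet) = (Wheel (2 * k)).edgeSet := by
  apply Set.Subset.antisymm
  · exact Set.iUnion_subset fun i => (edgeSet_DG hk i) ▸ ES_sub hk i
  · intro e he
    rw [Set.mem_iUnion]
    have hsplit : ∀ j : Fin (2 * k), ∃ i : Fin k, j = aI i ∨ j = bI i := by
      intro j
      have hj := j.isLt
      by_cases hjk : j.val < k
      · exact ⟨⟨j.val, hjk⟩, Or.inl (Fin.ext rfl)⟩
      · exact ⟨⟨j.val - k, by omega⟩, Or.inr (Fin.ext (by simp [bI]; omega))⟩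
    rcases edge_cases hk he with ⟨j, rfl⟩ | ⟨j, rfl⟩
    · obtain ⟨i, rfl | rfl⟩ := hsplit j
      · exact ⟨i, (edgeSet_DG hk i).symm ▸ (by right; left; rfl)⟩
      · exact ⟨i, (edgeSet_DG hk i).symm ▸ (by right; right; left; rfl)⟩
    · obtain ⟨i, rfl | rfl⟩ := hsplit j
      · exact ⟨i, (edgeSet_DG hk i).symm ▸ (by left; rfl)⟩
      · exact ⟨i, (edgeSet_DG hk i).symm ▸ (by right; right; right; rfl)⟩

end WP
namespace WP

variable {k : ℕ}

lemma path_graph_DG (hk : 2 ≤ k) (i : Fin k) : IsPathGraph (DG i) := by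
  have hia := i.isLt
  have hva : (aI i).val = i.val := rfl
  have hvb : (bI i).val = i.val + k := rfl
  have hvna : (nx (aI i)).val = (i.val + 1) % (2 * k) := rfl
  have hvna' : (nx (aI i)).val = i.val + 1 := by rw [hvna]; exact Nat.mod_eq_of_lt (by omega)
  have hvnb : (nx (bI i)).val = (i.val + k + 1) % (2 * k) := rfl
  have hnb : (nx (bI i)).val ≠ i.val ∧ (nx (bI i)).val ≠ i.val + 1 ∧
      (nx (bI i)).val ≠ i.val + k := by
    rcases mod2k (show 0 < k by omega) (x := i.val + k + 1) (by omega) with ⟨h1, h2⟩ | ⟨h1, h2⟩ <;>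
      rw [h1] at hvnb <;> omega
  have h01 : (DG i).Adj (some (nx (aI i))) (some (aI i))  := by
    rw [DG, SimpleGraph.fromEdgeSet_adj]
    exact ⟨by rw [Sym2.eq_swap]; exact Set.mem_insert _ _,
      fun h => nx_ne (aI i) (Option.some.inj h)⟩
  have h12 : (DG i).Adj (some (aI i)) none := by
    rw [DG, SimpleGraph.fromEdgeSet_adj]
    exact ⟨by rw [Sym2.eq_swap]; exact Or.inr (Or.inl rfl), by simp⟩
  have h23 : (DG i).Adj none (some (bI i)) := by
    rw [DG, SimpleGraph.fromEdgeSet_adj]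
    exact ⟨Or.inr (Or.inr (Or.inl rfl)), by simp⟩
  have h34 : (DG i).Adj (some (bI i)) (some (nx (bI i))) := by
    rw [DG, SimpleGraph.fromEdgeSet_adj]
    exact ⟨Or.inr (Or.inr (Or.inr rfl)), fun h => nx_ne (bI i) (Option.some.inj h).symm⟩
  refine ⟨_, _, SimpleGraph.Walk.cons h01 (SimpleGraph.Walk.cons h12
    (SimpleGraph.Walk.cons h23 (SimpleGraph.Walk.cons h34 SimpleGraph.Walk.nil))), ?_, ?_⟩
  · rw [SimpleGraph.Walk.isPath_def]
    simp only [SimpleGraph.Walk.support_cons, SimpleGraph.Walk.support_nil]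
    simp [List.nodup_cons, Option.some.injEq, Fin.ext_iff, hva, hvb, hvna']
    try omega
  · intro e
    rw [edgeSet_DG hk i]
    have e1 : s(some (nx (aI i)), some (aI i)) = rimE (aI i) := Sym2.eq_swap
    have e2 : s(some (aI i), (none : Vk k)) = spokeE (aI i) := Sym2.eq_swap
    simp only [SimpleGraph.Walk.edges_cons, SimpleGraph.Walk.edges_nil, e1, e2]
    show _ ↔ e ∈ [rimE (aI i), spokeE (aI i), spokeE (bI i), rimE (bI i)]
    simp only [ES, Set.mem_insert_iff, Set.mem_singleton_iff, List.mem_cons,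
      List.not_mem_nil, or_false]
    try tauto

end WP


/-- For `n = 2k+1` with `k ≥ 2`, the wheel `W_n` (rim length `2k`) decomposes into exactly
`k` pairwise edge-disjoint paths; consequently it is of class `1^±`. -/
theorem wheel_odd_class1 (k : ℕ) (hk : 2 ≤ k) :
    (∃ D : Fin k → SimpleGraph (Option (Fin (2 * k))),
      (∀ i, D i ≤ Wheel (2 * k)) ∧
      (∀ i, IsPathGraph (D i)) ∧
      (∀ i j, i ≠ j → Disjoint ((D i).edgeSet) ((D j).edgeSet)) ∧
      (⋃ i, (D i).edgeSet) = (Wheel (2 * k)).edgeSet) ∧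
    Class1pm (Wheel (2 * k)) := by
  constructor
  · exact ⟨WP.DG, fun i => WP.DG_le hk i, fun i => WP.path_graph_DG hk i,
      fun i j hij => WP.DG_disjoint hk hij, WP.DG_union hk⟩
  · exact WP.wheel_class1 hk
end
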